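/- arXiv:2308.13025 — 2 statements merged into one kernel-verified Lean document; each statement's English description precedes it below -/
import Mathlib

section
/- Let P_1, …, P_m be a Clifford system of signature (m, r) on ℝ^{2l}_s with m ≡ 0 (mod 4), r ≡ 0 (mod 2), and s ≤ 2l − 1, and set P := P_1P_2⋯P_m. Assume one of the following two cases holds: (a) r = 0 and s = 2(l − m); (b) r ∈ {2, 4, …, m−2}, s = l, and l = 2(m − r) > 0. Then M_+ is disconnected, M_{+,3} = ∅, M_{+,1} and M_{+,2} are both non-empty and path-connected, and the connected components of M_+ are exactly M_{+,1} and M_{+,2}. -/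
open Matrix

noncomputable section

/-- Entries of the signature matrix `J_{r,m-r}`, with 1-based indices:
`η_{ii} = -1` for `1 ≤ i ≤ r` and `η_{ii} = 1` for `r < i`; off-diagonal entries vanish. -/
def cliffEta (r i j : ℕ) : ℝ :=
  if i = j then (if i ≤ r then -1 else 1) else 0

/-- The matrix `J_{s,n-s} = diag(-E_s, E_{n-s})`. -/
def psJ (n s : ℕ) : Matrix (Fin n) (Fin n) ℝ :=
  Matrix.diagonal fun i => if (i : ℕ) < s then (-1 : ℝ) else 1

/-- The pseudo-inner product `⟨u, v⟩ = uᵀ J_{s,n-s} v` of `ℝ^n_s`. -/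
def psInner (n s : ℕ) (u v : Fin n → ℝ) : ℝ :=
  u ⬝ᵥ ((psJ n s) *ᵥ v)

/-- A Clifford system of signature `(m, r)` on `ℝ^{2l}_s`, indexed by `1, …, m`:
each `P i` is symmetric with respect to the pseudo-inner product, and
`P i * P j + P j * P i = 2 η_{ij} E_{2l}`. -/
def IsCliffordSystem (l s m r : ℕ)
    (P : ℕ → Matrix (Fin (2 * l)) (Fin (2 * l)) ℝ) : Prop :=
  (∀ i ∈ Finset.Icc 1 m, (P i)ᵀ = psJ (2 * l) s * P i * psJ (2 * l) s) ∧
  (∀ i ∈ Finset.Icc 1 m, ∀ j ∈ Finset.Icc 1 m,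
    P i * P j + P j * P i
      = (2 * cliffEta r i j) • (1 : Matrix (Fin (2 * l)) (Fin (2 * l)) ℝ))

/-!
Split `z = z₊ + z₋` along the eigenspaces `E₊`, `E₋` of the involution `P`; they are orthogonal,
and every `P_j` exchanges them. For `z ∈ M₊` the vectors `z₊`, `z₋`, `P_j z₊`, `P_j z₋` (`j > r`)
are mutually orthogonal, so if `z₊` and `z₋` were both positive they would give `2 (m - r) + 2`
orthogonal positive vectors, more than the positive index `2l - s` allows in either case. Hence
`⟨z₊, z₊⟩ ≤ 0` or `⟨z₊, z₊⟩ = 1 - ⟨z₋, z₋⟩ ≥ 1`: `M₊,₃ = ∅`, and the continuous function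
`⟨z₊, z₊⟩` separates `M₊,₁` from `M₊,₂`. Along hyperbolas in the plane spanned by `z₊` and `z₋`,
`M₊,₁` (resp. `M₊,₂`) retracts onto the unit sphere of `E₊` (resp. `E₋`), which is path-connected
because `P_{r+1} P_{r+2}` is an orthogonal complex structure on it.
-/

section PseudoInner

variable {n s : ℕ}

def IsPsSelfAdjoint (n s : ℕ) (A : Matrix (Fin n) (Fin n) ℝ) : Prop :=
  Aᵀ = psJ n s * A * psJ n s

theorem psJ_mul_psJ : psJ n s * psJ n s = 1 := by
  rw [psJ, diagonal_mul_diagonal, ← diagonal_one]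
  congr 1
  funext i
  split_ifs <;> norm_num

theorem psInner_eq_sum (u v : Fin n → ℝ) :
    psInner n s u v = ∑ j : Fin n, (if (j : ℕ) < s then -1 else 1) * u j * v j := by
  simp only [psInner, dotProduct, psJ, mulVec_diagonal]
  exact Finset.sum_congr rfl fun j _ => by ring

theorem psInner_comm (u v : Fin n → ℝ) : psInner n s u v = psInner n s v u := by
  simp only [psInner_eq_sum]
  exact Finset.sum_congr rfl fun j _ => by ring

@[simp]
theorem psInner_add_left (u v w : Fin n → ℝ) :
    psInner n s (u + v) w = psInner n s u w + psInner n s v w :=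
  add_dotProduct u v _

@[simp]
theorem psInner_add_right (u v w : Fin n → ℝ) :
    psInner n s u (v + w) = psInner n s u v + psInner n s u w := by
  simp [psInner, mulVec_add]

@[simp]
theorem psInner_smul_left (a : ℝ) (u v : Fin n → ℝ) :
    psInner n s (a • u) v = a * psInner n s u v :=
  smul_dotProduct a u _

@[simp]
theorem psInner_smul_right (a : ℝ) (u v : Fin n → ℝ) :
    psInner n s u (a • v) = a * psInner n s u v := by
  simp [psInner, mulVec_smul]

@[simp]
theorem psInner_neg_right (u v : Fin n → ℝ) : psInner n s u (-v) = -psInner n s u v := by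
  simp [psInner, mulVec_neg]

@[simp]
theorem psInner_zero_left (v : Fin n → ℝ) : psInner n s 0 v = 0 :=
  zero_dotProduct _

theorem psInner_sum_left {ι : Type*} (t : Finset ι) (f : ι → Fin n → ℝ) (v : Fin n → ℝ) :
    psInner n s (∑ i ∈ t, f i) v = ∑ i ∈ t, psInner n s (f i) v :=
  sum_dotProduct ..

theorem IsPsSelfAdjoint.psInner_mulVec {A : Matrix (Fin n) (Fin n) ℝ}
    (hA : IsPsSelfAdjoint n s A) (u v : Fin n → ℝ) :
    psInner n s (A *ᵥ u) v = psInner n s u (A *ᵥ v) := by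
  rw [psInner, dotProduct_comm, dotProduct_mulVec, ← mulVec_transpose, dotProduct_comm,
    mulVec_mulVec, hA, Matrix.mul_assoc, psJ_mul_psJ, Matrix.mul_one, ← mulVec_mulVec, psInner]

theorem psInner_sum_smul_self_of_pairwise {ι : Type*} [Fintype ι] {v : ι → Fin n → ℝ}
    (horth : Pairwise fun i j => psInner n s (v i) (v j) = 0) (g : ι → ℝ) :
    psInner n s (∑ i, g i • v i) (∑ i, g i • v i) = ∑ i, g i ^ 2 * psInner n s (v i) (v i) := by
  classical
  rw [psInner_sum_left]
  refine Finset.sum_congr rfl fun i _ => ?_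
  rw [psInner_comm, psInner_sum_left, Finset.sum_eq_single i]
  · simp only [psInner_smul_left, psInner_smul_right]
    ring
  · intro j _ hji
    simp [horth hji]
  · simp

theorem psInner_self_nonpos_of_forall_le {w : Fin n → ℝ}
    (hw : ∀ j : Fin n, s ≤ (j : ℕ) → w j = 0) : psInner n s w w ≤ 0 := by
  rw [psInner_eq_sum]
  refine Finset.sum_nonpos fun j _ => ?_
  split_ifs with hj
  · nlinarith [sq_nonneg (w j)]
  · simp [hw j (not_lt.mp hj)]

/-- Restriction to the last `n - s` coordinates is injective on the span of such a family: a
vector in its kernel has `⟨w, w⟩ ≤ 0`. -/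
theorem card_le_of_pairwise_psInner_eq_zero {ι : Type*} [Fintype ι] {v : ι → Fin n → ℝ}
    (horth : Pairwise fun i j => psInner n s (v i) (v j) = 0)
    (hpos : ∀ i, 0 < psInner n s (v i) (v i)) : Fintype.card ι ≤ n - s := by
  let π : (Fin n → ℝ) →ₗ[ℝ] Fin (n - s) → ℝ :=
    LinearMap.funLeft ℝ ℝ fun k => ⟨s + k, by omega⟩
  suffices LinearIndependent ℝ (π ∘ v) by simpa using this.fintype_card_le_finrank
  rw [Fintype.linearIndependent_iff]
  intro g hg i
  have hπ : π (∑ i, g i • v i) = 0 := by simpa [map_sum] using hg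
  have hw : ∀ j : Fin n, s ≤ (j : ℕ) → (∑ i, g i • v i) j = 0 := fun j hj => by
    have := congrFun hπ ⟨j - s, by omega⟩
    simp only [π, LinearMap.funLeft_apply, Pi.zero_apply] at this
    rwa [show (⟨s + (j - s), _⟩ : Fin n) = j from Fin.ext (by simp; omega)] at this
  have hsum := psInner_self_nonpos_of_forall_le hw
  rw [psInner_sum_smul_self_of_pairwise horth] at hsum
  have hnonneg : ∀ i ∈ Finset.univ, 0 ≤ g i ^ 2 * psInner n s (v i) (v i) :=
    fun i _ => mul_nonneg (sq_nonneg (g i)) (hpos i).le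
  have hterm := (Finset.sum_eq_zero_iff_of_nonneg hnonneg).mp
    (le_antisymm hsum (Finset.sum_nonneg hnonneg)) i (Finset.mem_univ i)
  simpa [(hpos i).ne'] using hterm

end PseudoInner

section Involution

variable {n s : ℕ} {A Q : Matrix (Fin n) (Fin n) ℝ}

def projPlus (A : Matrix (Fin n) (Fin n) ℝ) (z : Fin n → ℝ) : Fin n → ℝ :=
  (1 / 2 : ℝ) • (z + A *ᵥ z)

def projMinus (A : Matrix (Fin n) (Fin n) ℝ) (z : Fin n → ℝ) : Fin n → ℝ :=
  (1 / 2 : ℝ) • (z - A *ᵥ z)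

theorem projPlus_add_projMinus (z : Fin n → ℝ) : projPlus A z + projMinus A z = z := by
  unfold projPlus projMinus
  module

theorem mulVec_projPlus (hA2 : A * A = 1) (z : Fin n → ℝ) :
    A *ᵥ projPlus A z = projPlus A z := by
  simp only [projPlus, mulVec_smul, mulVec_add, mulVec_mulVec, hA2, one_mulVec, add_comm]

theorem mulVec_projMinus (hA2 : A * A = 1) (z : Fin n → ℝ) :
    A *ᵥ projMinus A z = -projMinus A z := by
  simp only [projMinus, mulVec_smul, mulVec_sub, mulVec_mulVec, hA2, one_mulVec]
  module

theorem projPlus_smul_add_smul {u v : Fin n → ℝ} (hu : A *ᵥ u = u) (hv : A *ᵥ v = -v)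
    (a b : ℝ) : projPlus A (a • u + b • v) = a • u := by
  simp only [projPlus, mulVec_add, mulVec_smul, hu, hv]
  module

theorem psInner_eq_zero_of_mulVec_eq_neg (hA : IsPsSelfAdjoint n s A) {u v : Fin n → ℝ}
    (hu : A *ᵥ u = u) (hv : A *ᵥ v = -v) : psInner n s u v = 0 := by
  have := hA.psInner_mulVec u v
  rw [hu, hv, psInner_neg_right] at this
  linarith

theorem psInner_projPlus_projMinus (hA2 : A * A = 1) (hA : IsPsSelfAdjoint n s A)
    (z : Fin n → ℝ) : psInner n s (projPlus A z) (projMinus A z) = 0 :=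
  psInner_eq_zero_of_mulVec_eq_neg hA (mulVec_projPlus hA2 z) (mulVec_projMinus hA2 z)

theorem psInner_smul_add_smul_self {u v : Fin n → ℝ} (huv : psInner n s u v = 0) (a b : ℝ) :
    psInner n s (a • u + b • v) (a • u + b • v)
      = a ^ 2 * psInner n s u u + b ^ 2 * psInner n s v v := by
  simp only [psInner_add_left, psInner_add_right, psInner_smul_left, psInner_smul_right,
    psInner_comm v u, huv]
  ring

theorem psInner_self_eq_projPlus_add_projMinus (hA2 : A * A = 1) (hA : IsPsSelfAdjoint n s A)
    (z : Fin n → ℝ) : psInner n s z z = psInner n s (projPlus A z) (projPlus A z)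
      + psInner n s (projMinus A z) (projMinus A z) := by
  conv_lhs => rw [← projPlus_add_projMinus (A := A) z]
  simpa using psInner_smul_add_smul_self (psInner_projPlus_projMinus hA2 hA z) 1 1

theorem mulVec_mulVec_eq_neg_of_anticomm (hQA : Q * A = -(A * Q)) {u : Fin n → ℝ}
    (hu : A *ᵥ u = u) : A *ᵥ (Q *ᵥ u) = -(Q *ᵥ u) := by
  rw [mulVec_mulVec, ← neg_neg (A * Q), ← hQA, neg_mulVec, ← mulVec_mulVec, hu]

theorem mulVec_mulVec_eq_self_of_anticomm (hQA : Q * A = -(A * Q)) {v : Fin n → ℝ}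
    (hv : A *ᵥ v = -v) : A *ᵥ (Q *ᵥ v) = Q *ᵥ v := by
  rw [mulVec_mulVec, ← neg_neg (A * Q), ← hQA, neg_mulVec, ← mulVec_mulVec, hv, mulVec_neg,
    neg_neg]

theorem psInner_mulVec_mulVec_of_mul_self (hQ : IsPsSelfAdjoint n s Q) (hQ2 : Q * Q = 1)
    (u v : Fin n → ℝ) : psInner n s (Q *ᵥ u) (Q *ᵥ v) = psInner n s u v := by
  rw [hQ.psInner_mulVec, mulVec_mulVec, hQ2, one_mulVec]

theorem psInner_mulVec_mulVec_of_anticomm {Q' : Matrix (Fin n) (Fin n) ℝ}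
    (hQ : IsPsSelfAdjoint n s Q) (hQ' : IsPsSelfAdjoint n s Q') (hQQ' : Q * Q' = -(Q' * Q))
    (x : Fin n → ℝ) : psInner n s (Q *ᵥ x) (Q' *ᵥ x) = 0 := by
  have h : psInner n s (Q *ᵥ x) (Q' *ᵥ x) = -psInner n s (Q' *ᵥ x) (Q *ᵥ x) := by
    rw [hQ.psInner_mulVec, mulVec_mulVec, hQQ', neg_mulVec, psInner_neg_right,
      ← mulVec_mulVec, ← hQ'.psInner_mulVec]
  rw [psInner_comm (Q' *ᵥ x)] at h
  linarith

theorem psInner_mulVec_projPlus_self (hA2 : A * A = 1) (hA : IsPsSelfAdjoint n s A)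
    (hQA : Q * A = -(A * Q)) (z : Fin n → ℝ) :
    psInner n s (Q *ᵥ projPlus A z) (projPlus A z) = 0 := by
  rw [psInner_comm]
  exact psInner_eq_zero_of_mulVec_eq_neg hA (mulVec_projPlus hA2 z)
    (mulVec_mulVec_eq_neg_of_anticomm hQA (mulVec_projPlus hA2 z))

theorem psInner_mulVec_projMinus_self (hA2 : A * A = 1) (hA : IsPsSelfAdjoint n s A)
    (hQA : Q * A = -(A * Q)) (z : Fin n → ℝ) :
    psInner n s (Q *ᵥ projMinus A z) (projMinus A z) = 0 :=
  psInner_eq_zero_of_mulVec_eq_neg hA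
    (mulVec_mulVec_eq_self_of_anticomm hQA (mulVec_projMinus hA2 z)) (mulVec_projMinus hA2 z)

/-- The `E₊`-`E₊` and `E₋`-`E₋` parts of `⟨Q z, z⟩` vanish and its two mixed parts agree. -/
theorem psInner_mulVec_projPlus_projMinus (hA2 : A * A = 1) (hA : IsPsSelfAdjoint n s A)
    (hQ : IsPsSelfAdjoint n s Q) (hQA : Q * A = -(A * Q)) {z : Fin n → ℝ}
    (hz : psInner n s (Q *ᵥ z) z = 0) :
    psInner n s (Q *ᵥ projPlus A z) (projMinus A z) = 0 := by
  rw [← projPlus_add_projMinus (A := A) z, mulVec_add] at hz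
  simp only [psInner_add_left, psInner_add_right, psInner_mulVec_projPlus_self hA2 hA hQA,
    psInner_mulVec_projMinus_self hA2 hA hQA, hQ.psInner_mulVec (projMinus A z),
    psInner_comm (projMinus A z)] at hz
  linarith

theorem psInner_mulVec_smul_projPlus_add_smul_projMinus (hA2 : A * A = 1)
    (hA : IsPsSelfAdjoint n s A) (hQ : IsPsSelfAdjoint n s Q) (hQA : Q * A = -(A * Q))
    {z : Fin n → ℝ} (hz : psInner n s (Q *ᵥ z) z = 0) (a b : ℝ) :
    psInner n s (Q *ᵥ (a • projPlus A z + b • projMinus A z))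
      (a • projPlus A z + b • projMinus A z) = 0 := by
  have hpm := psInner_mulVec_projPlus_projMinus hA2 hA hQ hQA hz
  simp only [mulVec_add, mulVec_smul, psInner_add_left, psInner_add_right, psInner_smul_left,
    psInner_smul_right, psInner_mulVec_projPlus_self hA2 hA hQA,
    psInner_mulVec_projMinus_self hA2 hA hQA, hQ.psInner_mulVec (projMinus A z),
    psInner_comm (projMinus A z), hpm]
  ring

end Involution

section Trichotomy

variable {n s k : ℕ} {A : Matrix (Fin n) (Fin n) ℝ} {Q : Fin k → Matrix (Fin n) (Fin n) ℝ}

theorem pairwise_psInner_option_elim (hQ : ∀ i, IsPsSelfAdjoint n s (Q i))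
    (hQQ : Pairwise fun i j => Q i * Q j = -(Q j * Q i)) {x y : Fin n → ℝ}
    (hxy : ∀ i, psInner n s x (Q i *ᵥ y) = 0) :
    Pairwise fun o o' : Option (Fin k) =>
      psInner n s (o.elim x (Q · *ᵥ y)) (o'.elim x (Q · *ᵥ y)) = 0 := by
  rintro (_ | i) (_ | j) hij
  · exact absurd rfl hij
  · exact hxy j
  · simpa [psInner_comm] using hxy i
  · exact psInner_mulVec_mulVec_of_anticomm (hQ i) (hQ j) (hQQ fun h => hij (congrArg some h)) y

theorem psInner_projPlus_nonpos_or_projMinus_nonpos (hk : n < s + 2 * (k + 1))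
    (hA2 : A * A = 1) (hA : IsPsSelfAdjoint n s A) (hQ : ∀ i, IsPsSelfAdjoint n s (Q i))
    (hQ2 : ∀ i, Q i * Q i = 1) (hQQ : Pairwise fun i j => Q i * Q j = -(Q j * Q i))
    (hQA : ∀ i, Q i * A = -(A * Q i)) {z : Fin n → ℝ}
    (hz : ∀ i, psInner n s (Q i *ᵥ z) z = 0) :
    psInner n s (projPlus A z) (projPlus A z) ≤ 0 ∨
      psInner n s (projMinus A z) (projMinus A z) ≤ 0 := by
  by_contra! hpos
  set zp := projPlus A z
  set zm := projMinus A z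
  have hpm (i) : psInner n s (Q i *ᵥ zp) zm = 0 :=
    psInner_mulVec_projPlus_projMinus hA2 hA (hQ i) (hQA i) (hz i)
  let vp : Option (Fin k) → Fin n → ℝ := fun o => o.elim zp (Q · *ᵥ zm)
  let vm : Option (Fin k) → Fin n → ℝ := fun o => o.elim zm (Q · *ᵥ zp)
  have hvp (o) : A *ᵥ vp o = vp o := by
    cases o
    exacts [mulVec_projPlus hA2 z,
      mulVec_mulVec_eq_self_of_anticomm (hQA _) (mulVec_projMinus hA2 z)]
  have hvm (o) : A *ᵥ vm o = -vm o := by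
    cases o
    exacts [mulVec_projMinus hA2 z,
      mulVec_mulVec_eq_neg_of_anticomm (hQA _) (mulVec_projPlus hA2 z)]
  have horth : Pairwise fun i j => psInner n s (Sum.elim vp vm i) (Sum.elim vp vm j) = 0 := by
    rintro (o | o) (o' | o') h
    · exact pairwise_psInner_option_elim hQ hQQ
        (fun i => by rw [← (hQ i).psInner_mulVec, hpm]) (fun h' => h (congrArg _ h'))
    · exact psInner_eq_zero_of_mulVec_eq_neg hA (hvp o) (hvm o')
    · rw [psInner_comm]; exact psInner_eq_zero_of_mulVec_eq_neg hA (hvp o') (hvm o)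
    · exact pairwise_psInner_option_elim hQ hQQ
        (fun i => by rw [psInner_comm, hpm]) (fun h' => h (congrArg _ h'))
  have hposv : ∀ i, 0 < psInner n s (Sum.elim vp vm i) (Sum.elim vp vm i) := by
    rintro ((_ | i) | (_ | i))
    · exact hpos.1
    · simpa [vp, psInner_mulVec_mulVec_of_mul_self (hQ i) (hQ2 i)] using hpos.2
    · exact hpos.2
    · simpa [vm, psInner_mulVec_mulVec_of_mul_self (hQ i) (hQ2 i)] using hpos.1
  have := card_le_of_pairwise_psInner_eq_zero horth hposv
  simp only [Fintype.card_sum, Fintype.card_option, Fintype.card_fin] at this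
  omega

end Trichotomy

section Paths

open Real

variable {n s : ℕ} {S : Set (Fin n → ℝ)} {W : Submodule ℝ (Fin n → ℝ)}

theorem joinedIn_cos_smul_add_sin_smul (hWS : ∀ x ∈ W, psInner n s x x = 1 → x ∈ S)
    {x y : Fin n → ℝ} (hx : x ∈ W) (hy : y ∈ W) (hxx : psInner n s x x = 1)
    (hyy : psInner n s y y = 1) (hxy : psInner n s x y = 0) (θ : ℝ) :
    JoinedIn S x (cos θ • x + sin θ • y) := by
  refine JoinedIn.ofLine (f := fun t : ℝ => cos (t * θ) • x + sin (t * θ) • y)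
    (by fun_prop) (by simp) (by simp) ?_
  rintro _ ⟨t, -, rfl⟩
  refine hWS _ (W.add_mem (W.smul_mem _ hx) (W.smul_mem _ hy)) ?_
  rw [psInner_smul_add_smul_self hxy, hxx, hyy]
  linear_combination sin_sq_add_cos_sq (t * θ)

theorem joinedIn_of_psInner_eq_zero (hWS : ∀ x ∈ W, psInner n s x x = 1 → x ∈ S)
    {x y : Fin n → ℝ} (hx : x ∈ W) (hy : y ∈ W) (hxx : psInner n s x x = 1)
    (hyy : psInner n s y y = 1) (hxy : psInner n s x y = 0) : JoinedIn S x y := by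
  simpa using joinedIn_cos_smul_add_sin_smul hWS hx hy hxx hyy hxy (π / 2)

/-- `T` is an orthogonal complex structure: `x` is joined to `T x`, and `y` can be rotated in the
plane `⟨y, T y⟩` until it is orthogonal to `T x`. -/
theorem joinedIn_of_complexStructure (hWS : ∀ x ∈ W, psInner n s x x = 1 → x ∈ S)
    {T : Matrix (Fin n) (Fin n) ℝ} (hTW : ∀ x ∈ W, T *ᵥ x ∈ W)
    (hT : ∀ x y, psInner n s (T *ᵥ x) (T *ᵥ y) = psInner n s x y)
    (hTx : ∀ x, psInner n s x (T *ᵥ x) = 0) {x y : Fin n → ℝ} (hx : x ∈ W) (hy : y ∈ W)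
    (hxx : psInner n s x x = 1) (hyy : psInner n s y y = 1) : JoinedIn S x y := by
  by_cases hxy : psInner n s x y = 0
  · exact joinedIn_of_psInner_eq_zero hWS hx hy hxx hyy hxy
  set θ := arctan (-(psInner n s (T *ᵥ x) y / psInner n s x y)) with hθ
  have hy' : cos θ • y + sin θ • T *ᵥ y ∈ W :=
    W.add_mem (W.smul_mem _ hy) (W.smul_mem _ (hTW y hy))
  have hy'y' : psInner n s (cos θ • y + sin θ • T *ᵥ y) (cos θ • y + sin θ • T *ᵥ y) = 1 := by
    rw [psInner_smul_add_smul_self (hTx y), hyy, hT, hyy]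
    linear_combination sin_sq_add_cos_sq θ
  have hTxy' : psInner n s (T *ᵥ x) (cos θ • y + sin θ • T *ᵥ y) = 0 := by
    rw [psInner_add_right, psInner_smul_right, psInner_smul_right, hT, hθ, cos_arctan,
      sin_arctan]
    field_simp
    ring
  have hTxTx : psInner n s (T *ᵥ x) (T *ᵥ x) = 1 := by rw [hT, hxx]
  exact ((joinedIn_of_psInner_eq_zero hWS hx (hTW x hx) hxx hTxTx (hTx x)).trans
    (joinedIn_of_psInner_eq_zero hWS (hTW x hx) hy' hTxTx hy'y' hTxy')).trans
    (joinedIn_cos_smul_add_sin_smul hWS hy (hTW y hy) hyy (by rw [hT, hyy]) (hTx y) θ).symm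

theorem isPathConnected_of_complexStructure (hWS : ∀ x ∈ W, psInner n s x x = 1 → x ∈ S)
    {T : Matrix (Fin n) (Fin n) ℝ} (hTW : ∀ x ∈ W, T *ᵥ x ∈ W)
    (hT : ∀ x y, psInner n s (T *ᵥ x) (T *ᵥ y) = psInner n s x y)
    (hTx : ∀ x, psInner n s x (T *ᵥ x) = 0) (hne : S.Nonempty)
    (hret : ∀ z ∈ S, ∃ x ∈ W, psInner n s x x = 1 ∧ JoinedIn S z x) : IsPathConnected S := by
  refine isPathConnected_iff.mpr ⟨hne, fun z hz w hw => ?_⟩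
  obtain ⟨x, hx, hxx, hzx⟩ := hret z hz
  obtain ⟨y, hy, hyy, hwy⟩ := hret w hw
  exact (hzx.trans (joinedIn_of_complexStructure hWS hTW hT hTx hx hy hxx hyy)).trans hwy.symm

end Paths

theorem joinedIn_add_inv_sqrt_smul {E : Type*} [AddCommGroup E] [Module ℝ E]
    [TopologicalSpace E] [ContinuousAdd E] [ContinuousSMul ℝ E] {S : Set E} {u v : E}
    {p c : ℝ} (hpc : p + c = 1) (hc : c ≤ 0)
    (hS : ∀ a b : ℝ, a ^ 2 * p + b ^ 2 * c = 1 → 1 ≤ a ^ 2 * p → a • u + b • v ∈ S) :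
    JoinedIn S (u + v) ((√p)⁻¹ • u) := by
  have hp : 0 < p := by linarith
  have hnum (t : ℝ) : 1 ≤ 1 - (1 - t) ^ 2 * c := by nlinarith [sq_nonneg (1 - t)]
  refine JoinedIn.ofLine (f := fun t : ℝ => √((1 - (1 - t) ^ 2 * c) / p) • u + (1 - t) • v)
    (by fun_prop) ?_ ?_ ?_
  · simp [show 1 - c = p by linarith, hp.ne']
  · simp [Real.sqrt_inv]
  rintro _ ⟨t, -, rfl⟩
  have ha : √((1 - (1 - t) ^ 2 * c) / p) ^ 2 * p = 1 - (1 - t) ^ 2 * c := by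
    rw [Real.sq_sqrt (div_nonneg (by linarith [hnum t]) hp.le), div_mul_cancel₀ _ hp.ne']
  exact hS _ _ (by rw [ha]; ring) (by rw [ha]; exact hnum t)

section Gap

variable {X : Type*} [TopologicalSpace X] {S : Set X} {f : X → ℝ} {a b : ℝ}

theorem IsPreconnected.le_of_forall_le_or_le (hS : IsPreconnected S) (hf : ContinuousOn f S)
    (hab : a < b) (hgap : ∀ x ∈ S, f x ≤ a ∨ b ≤ f x) {x y : X} (hx : x ∈ S) (hy : y ∈ S)
    (hxa : f x ≤ a) : f y ≤ a := by
  by_contra hya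
  have hby := (hgap y hy).resolve_left hya
  obtain ⟨w, hw, hfw⟩ := hS.intermediate_value hx hy hf
    (show (a + b) / 2 ∈ Set.Icc (f x) (f y) from ⟨by linarith, by linarith⟩)
  rcases hgap w hw with h | h <;> linarith

theorem not_isPreconnected_of_forall_le_or_le (hf : ContinuousOn f S) (hab : a < b)
    (hgap : ∀ x ∈ S, f x ≤ a ∨ b ≤ f x) {x y : X} (hx : x ∈ S) (hxa : f x ≤ a) (hy : y ∈ S)
    (hby : b ≤ f y) : ¬IsPreconnected S := fun hS => by
  linarith [hS.le_of_forall_le_or_le hf hab hgap hx hy hxa]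

theorem connectedComponentIn_eq_of_forall_le_or_le (hf : ContinuousOn f S) (hab : a < b)
    (hgap : ∀ x ∈ S, f x ≤ a ∨ b ≤ f x) (hC : IsPreconnected {x ∈ S | f x ≤ a}) {z : X}
    (hz : z ∈ {x ∈ S | f x ≤ a}) : connectedComponentIn S z = {x ∈ S | f x ≤ a} := by
  have hsub := connectedComponentIn_subset S z
  refine (hC.subset_connectedComponentIn hz (Set.sep_subset _ _)).antisymm'
    fun w hw => ⟨hsub hw, ?_⟩
  exact isPreconnected_connectedComponentIn.le_of_forall_le_or_le (hf.mono hsub) hab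
    (fun x hx => hgap x (hsub hx)) (mem_connectedComponentIn hz.1) hw hz.2

theorem connectedComponentIn_eq_of_forall_le_or_le' (hf : ContinuousOn f S) (hab : a < b)
    (hgap : ∀ x ∈ S, f x ≤ a ∨ b ≤ f x) (hC : IsPreconnected {x ∈ S | b ≤ f x}) {z : X}
    (hz : z ∈ {x ∈ S | b ≤ f x}) : connectedComponentIn S z = {x ∈ S | b ≤ f x} := by
  have hset : {x ∈ S | b ≤ f x} = {x ∈ S | -f x ≤ -b} := by simp only [neg_le_neg_iff]
  rw [hset] at hC hz ⊢
  exact connectedComponentIn_eq_of_forall_le_or_le hf.neg (neg_lt_neg hab)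
    (fun x hx => by simpa [or_comm] using hgap x hx) hC hz

end Gap

section FocalSet

variable {n s m : ℕ} {P : ℕ → Matrix (Fin n) (Fin n) ℝ} {A : Matrix (Fin n) (Fin n) ℝ}

def mPlus (n s m : ℕ) (P : ℕ → Matrix (Fin n) (Fin n) ℝ) : Set (Fin n → ℝ) :=
  {x | psInner n s x x = 1 ∧ ∀ j ∈ Finset.Icc 1 m, psInner n s (P j *ᵥ x) x = 0}

def mPlusOne (n s m : ℕ) (P : ℕ → Matrix (Fin n) (Fin n) ℝ) (A : Matrix (Fin n) (Fin n) ℝ) :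
    Set (Fin n → ℝ) :=
  {z ∈ mPlus n s m P | 1 ≤ psInner n s (projPlus A z) (projPlus A z)}

def mPlusTwo (n s m : ℕ) (P : ℕ → Matrix (Fin n) (Fin n) ℝ) (A : Matrix (Fin n) (Fin n) ℝ) :
    Set (Fin n → ℝ) :=
  {z ∈ mPlus n s m P | psInner n s (projPlus A z) (projPlus A z) ≤ 0}

theorem psInner_inv_sqrt_smul_self {w : Fin n → ℝ} (hw : 0 < psInner n s w w) :
    psInner n s ((√(psInner n s w w))⁻¹ • w) ((√(psInner n s w w))⁻¹ • w) = 1 := by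
  rw [psInner_smul_left, psInner_smul_right, ← mul_assoc, ← mul_inv, Real.mul_self_sqrt hw.le,
    inv_mul_cancel₀ hw.ne']

theorem mem_mPlusOne_of_mulVec_eq_self (hA : IsPsSelfAdjoint n s A)
    (hPA : ∀ j ∈ Finset.Icc 1 m, P j * A = -(A * P j)) {x : Fin n → ℝ} (hx : A *ᵥ x = x)
    (hxx : psInner n s x x = 1) : x ∈ mPlusOne n s m P A := by
  have hpx : projPlus A x = x := by
    simpa using projPlus_smul_add_smul hx (by rw [mulVec_zero, neg_zero]) 1 0
  refine ⟨⟨hxx, fun j hj => ?_⟩, by rw [hpx, hxx]⟩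
  rw [psInner_comm]
  exact psInner_eq_zero_of_mulVec_eq_neg hA hx (mulVec_mulVec_eq_neg_of_anticomm (hPA j hj) hx)

theorem mem_mPlusTwo_of_mulVec_eq_neg (hA : IsPsSelfAdjoint n s A)
    (hPA : ∀ j ∈ Finset.Icc 1 m, P j * A = -(A * P j)) {y : Fin n → ℝ} (hy : A *ᵥ y = -y)
    (hyy : psInner n s y y = 1) : y ∈ mPlusTwo n s m P A := by
  have hpy : projPlus A y = 0 := by simpa using projPlus_smul_add_smul (mulVec_zero A) hy 0 1
  refine ⟨⟨hyy, fun j hj => ?_⟩, by simp [hpy]⟩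
  exact psInner_eq_zero_of_mulVec_eq_neg hA (mulVec_mulVec_eq_self_of_anticomm (hPA j hj) hy) hy

theorem smul_projPlus_add_smul_projMinus_mem_mPlus (hA2 : A * A = 1)
    (hA : IsPsSelfAdjoint n s A) (hPs : ∀ j ∈ Finset.Icc 1 m, IsPsSelfAdjoint n s (P j))
    (hPA : ∀ j ∈ Finset.Icc 1 m, P j * A = -(A * P j)) {z : Fin n → ℝ}
    (hz : z ∈ mPlus n s m P) {a b : ℝ} (hab : a ^ 2 * psInner n s (projPlus A z) (projPlus A z)
      + b ^ 2 * psInner n s (projMinus A z) (projMinus A z) = 1) :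
    a • projPlus A z + b • projMinus A z ∈ mPlus n s m P :=
  ⟨by rw [psInner_smul_add_smul_self (psInner_projPlus_projMinus hA2 hA z), hab],
    fun j hj => psInner_mulVec_smul_projPlus_add_smul_projMinus hA2 hA (hPs j hj) (hPA j hj)
      (hz.2 j hj) a b⟩

theorem joinedIn_mPlusOne (hA2 : A * A = 1) (hA : IsPsSelfAdjoint n s A)
    (hPs : ∀ j ∈ Finset.Icc 1 m, IsPsSelfAdjoint n s (P j))
    (hPA : ∀ j ∈ Finset.Icc 1 m, P j * A = -(A * P j)) {z : Fin n → ℝ}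
    (hz : z ∈ mPlusOne n s m P A) :
    JoinedIn (mPlusOne n s m P A) z
      ((√(psInner n s (projPlus A z) (projPlus A z)))⁻¹ • projPlus A z) := by
  have hsum := psInner_self_eq_projPlus_add_projMinus hA2 hA z
  rw [hz.1.1] at hsum
  have key : JoinedIn (mPlusOne n s m P A) (projPlus A z + projMinus A z) _ :=
    joinedIn_add_inv_sqrt_smul hsum.symm (by linarith [hz.2]) fun a b hab ha =>
      ⟨smul_projPlus_add_smul_projMinus_mem_mPlus hA2 hA hPs hPA hz.1 hab, by
        rwa [projPlus_smul_add_smul (mulVec_projPlus hA2 z) (mulVec_projMinus hA2 z),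
          psInner_smul_left, psInner_smul_right, ← mul_assoc, ← sq]⟩
  rwa [projPlus_add_projMinus] at key

theorem joinedIn_mPlusTwo (hA2 : A * A = 1) (hA : IsPsSelfAdjoint n s A)
    (hPs : ∀ j ∈ Finset.Icc 1 m, IsPsSelfAdjoint n s (P j))
    (hPA : ∀ j ∈ Finset.Icc 1 m, P j * A = -(A * P j)) {z : Fin n → ℝ}
    (hz : z ∈ mPlusTwo n s m P A) :
    JoinedIn (mPlusTwo n s m P A) z
      ((√(psInner n s (projMinus A z) (projMinus A z)))⁻¹ • projMinus A z) := by
  have hsum := psInner_self_eq_projPlus_add_projMinus hA2 hA z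
  rw [hz.1.1] at hsum
  have key : JoinedIn (mPlusTwo n s m P A) (projMinus A z + projPlus A z) _ :=
    joinedIn_add_inv_sqrt_smul (by linarith) hz.2 fun a b hab ha => by
      rw [add_comm] at hab ⊢
      refine ⟨smul_projPlus_add_smul_projMinus_mem_mPlus hA2 hA hPs hPA hz.1 hab, ?_⟩
      rw [projPlus_smul_add_smul (mulVec_projPlus hA2 z) (mulVec_projMinus hA2 z),
        psInner_smul_left, psInner_smul_right, ← mul_assoc, ← sq]
      linarith
  rwa [add_comm, projPlus_add_projMinus] at key

/-- `Q` exchanges the eigenspaces isometrically, and one of them contains a positive vector. -/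
theorem exists_unit_mulVec_eq_self_and_neg (hs : s < n) (hA2 : A * A = 1)
    (hA : IsPsSelfAdjoint n s A) {Q : Matrix (Fin n) (Fin n) ℝ} (hQ : IsPsSelfAdjoint n s Q)
    (hQ2 : Q * Q = 1) (hQA : Q * A = -(A * Q)) :
    (∃ x, A *ᵥ x = x ∧ psInner n s x x = 1) ∧ ∃ y, A *ᵥ y = -y ∧ psInner n s y y = 1 := by
  let e : Fin n → ℝ := Pi.single ⟨n - 1, by omega⟩ 1
  have hee : psInner n s e e = 1 := by
    rw [psInner_eq_sum,
      Finset.sum_eq_single ⟨n - 1, by omega⟩ (fun j _ hj => by simp [e, hj]) (by simp)]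
    simp [e, show ¬n - 1 < s by omega]
  have hQiso := psInner_mulVec_mulVec_of_mul_self hQ hQ2
  rw [psInner_self_eq_projPlus_add_projMinus hA2 hA] at hee
  rcases lt_or_ge 0 (psInner n s (projPlus A e) (projPlus A e)) with hpos | hnonpos
  · have hx : A *ᵥ ((√(psInner n s (projPlus A e) (projPlus A e)))⁻¹ • projPlus A e)
        = (√(psInner n s (projPlus A e) (projPlus A e)))⁻¹ • projPlus A e := by
      rw [mulVec_smul, mulVec_projPlus hA2 e]
    exact ⟨⟨_, hx, psInner_inv_sqrt_smul_self hpos⟩, _,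
      mulVec_mulVec_eq_neg_of_anticomm hQA hx,
      by rw [hQiso, psInner_inv_sqrt_smul_self hpos]⟩
  · have hpos : 0 < psInner n s (projMinus A e) (projMinus A e) := by linarith
    have hy : A *ᵥ ((√(psInner n s (projMinus A e) (projMinus A e)))⁻¹ • projMinus A e)
        = -((√(psInner n s (projMinus A e) (projMinus A e)))⁻¹ • projMinus A e) := by
      rw [mulVec_smul, mulVec_projMinus hA2 e, smul_neg]
    exact ⟨⟨_, mulVec_mulVec_eq_self_of_anticomm hQA hy, by
      rw [hQiso, psInner_inv_sqrt_smul_self hpos]⟩, _, hy, psInner_inv_sqrt_smul_self hpos⟩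

end FocalSet

section ComplexStructure

variable {n s : ℕ} {A Q Q' : Matrix (Fin n) (Fin n) ℝ}

theorem mul_mulVec_mem_eigenspace (hQA : Q * A = -(A * Q)) (hQ'A : Q' * A = -(A * Q'))
    {ε : ℝ} {x : Fin n → ℝ} (hx : x ∈ Module.End.eigenspace (toLin' A) ε) :
    (Q * Q') *ᵥ x ∈ Module.End.eigenspace (toLin' A) ε := by
  rw [Module.End.mem_eigenspace_iff, toLin'_apply] at hx ⊢
  rw [mulVec_mulVec, ← Matrix.mul_assoc, ← neg_neg (A * Q), ← hQA, neg_mul, Matrix.mul_assoc,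
    ← neg_neg (A * Q'), ← hQ'A, mul_neg, neg_neg, ← Matrix.mul_assoc, ← mulVec_mulVec, hx,
    mulVec_smul]

theorem psInner_mul_mulVec_mul_mulVec (hQ : IsPsSelfAdjoint n s Q) (hQ2 : Q * Q = 1)
    (hQ' : IsPsSelfAdjoint n s Q') (hQ'2 : Q' * Q' = 1) (x y : Fin n → ℝ) :
    psInner n s ((Q * Q') *ᵥ x) ((Q * Q') *ᵥ y) = psInner n s x y := by
  rw [← mulVec_mulVec, ← mulVec_mulVec, psInner_mulVec_mulVec_of_mul_self hQ hQ2,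
    psInner_mulVec_mulVec_of_mul_self hQ' hQ'2]

theorem psInner_mul_mulVec_self (hQ : IsPsSelfAdjoint n s Q) (hQ' : IsPsSelfAdjoint n s Q')
    (hQQ' : Q * Q' = -(Q' * Q)) (x : Fin n → ℝ) : psInner n s x ((Q * Q') *ᵥ x) = 0 := by
  rw [← mulVec_mulVec, ← hQ.psInner_mulVec, psInner_mulVec_mulVec_of_anticomm hQ hQ' hQQ']

end ComplexStructure

section Components

open Finset

variable {n s m : ℕ} {P : ℕ → Matrix (Fin n) (Fin n) ℝ} {A : Matrix (Fin n) (Fin n) ℝ}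

theorem continuous_psInner_projPlus :
    Continuous fun z => psInner n s (projPlus A z) (projPlus A z) := by
  unfold psInner projPlus
  fun_prop

theorem isPathConnected_mPlusOne (hs : s < n) (hA2 : A * A = 1) (hA : IsPsSelfAdjoint n s A)
    (hPs : ∀ j ∈ Icc 1 m, IsPsSelfAdjoint n s (P j))
    (hPA : ∀ j ∈ Icc 1 m, P j * A = -(A * P j)) {i j : ℕ} (hi : i ∈ Icc 1 m)
    (hj : j ∈ Icc 1 m) (hPi2 : P i * P i = 1) (hPj2 : P j * P j = 1)
    (hPij : P i * P j = -(P j * P i)) : IsPathConnected (mPlusOne n s m P A) := by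
  have hWS (x) (hx : x ∈ Module.End.eigenspace (toLin' A) 1) (hxx : psInner n s x x = 1) :
      x ∈ mPlusOne n s m P A :=
    mem_mPlusOne_of_mulVec_eq_self hA hPA (by simpa using hx) hxx
  obtain ⟨⟨x, hx, hxx⟩, -⟩ :=
    exists_unit_mulVec_eq_self_and_neg hs hA2 hA (hPs i hi) hPi2 (hPA i hi)
  refine isPathConnected_of_complexStructure hWS
    (fun _ => mul_mulVec_mem_eigenspace (hPA i hi) (hPA j hj))
    (psInner_mul_mulVec_mul_mulVec (hPs i hi) hPi2 (hPs j hj) hPj2)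
    (psInner_mul_mulVec_self (hPs i hi) (hPs j hj) hPij) ⟨x, hWS x (by simpa using hx) hxx⟩
    fun z hz => ⟨_, ?_, psInner_inv_sqrt_smul_self (by linarith [hz.2]),
      joinedIn_mPlusOne hA2 hA hPs hPA hz⟩
  simp [mulVec_projPlus hA2]

theorem isPathConnected_mPlusTwo (hs : s < n) (hA2 : A * A = 1) (hA : IsPsSelfAdjoint n s A)
    (hPs : ∀ j ∈ Icc 1 m, IsPsSelfAdjoint n s (P j))
    (hPA : ∀ j ∈ Icc 1 m, P j * A = -(A * P j)) {i j : ℕ} (hi : i ∈ Icc 1 m)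
    (hj : j ∈ Icc 1 m) (hPi2 : P i * P i = 1) (hPj2 : P j * P j = 1)
    (hPij : P i * P j = -(P j * P i)) : IsPathConnected (mPlusTwo n s m P A) := by
  have hWS (y) (hy : y ∈ Module.End.eigenspace (toLin' A) (-1)) (hyy : psInner n s y y = 1) :
      y ∈ mPlusTwo n s m P A :=
    mem_mPlusTwo_of_mulVec_eq_neg hA hPA (by simpa using hy) hyy
  obtain ⟨-, y, hy, hyy⟩ :=
    exists_unit_mulVec_eq_self_and_neg hs hA2 hA (hPs i hi) hPi2 (hPA i hi)
  refine isPathConnected_of_complexStructure hWS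
    (fun _ => mul_mulVec_mem_eigenspace (hPA i hi) (hPA j hj))
    (psInner_mul_mulVec_mul_mulVec (hPs i hi) hPi2 (hPs j hj) hPj2)
    (psInner_mul_mulVec_self (hPs i hi) (hPs j hj) hPij) ⟨y, hWS y (by simpa using hy) hyy⟩
    fun z hz => ⟨_, ?_, psInner_inv_sqrt_smul_self ?_, joinedIn_mPlusTwo hA2 hA hPs hPA hz⟩
  · simp [mulVec_projMinus hA2]
  · linarith [hz.2, hz.1.1, psInner_self_eq_projPlus_add_projMinus hA2 hA z]

end Components

def cliffordProd {n : ℕ} (P : ℕ → Matrix (Fin n) (Fin n) ℝ) (k : ℕ) :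
    Matrix (Fin n) (Fin n) ℝ :=
  ((List.range k).map fun i => P (1 + i)).prod

theorem cliffordProd_zero {n : ℕ} (P : ℕ → Matrix (Fin n) (Fin n) ℝ) : cliffordProd P 0 = 1 :=
  rfl

theorem cliffordProd_succ {n : ℕ} (P : ℕ → Matrix (Fin n) (Fin n) ℝ) (k : ℕ) :
    cliffordProd P (k + 1) = cliffordProd P k * P (k + 1) := by
  simp [cliffordProd, List.range_succ, add_comm]

theorem Nat.add_one_choose_two (k : ℕ) : (k + 1).choose 2 = k.choose 2 + k := by
  rw [Nat.choose_succ_succ', Nat.choose_one_right, add_comm]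

theorem Nat.even_choose_two_of_mod_four {m : ℕ} (hm4 : m % 4 = 0) : Even (m.choose 2) := by
  obtain ⟨t, rfl⟩ : ∃ t, m = 4 * t := ⟨m / 4, by omega⟩
  rw [Nat.choose_two_right, show 4 * t * (4 * t - 1) = 2 * (2 * t * (4 * t - 1)) by ring,
    Nat.mul_div_cancel_left _ two_pos]
  exact ⟨t * (4 * t - 1), by ring⟩

namespace IsCliffordSystem

open Finset

variable {l s m r : ℕ} {P : ℕ → Matrix (Fin (2 * l)) (Fin (2 * l)) ℝ}

theorem anticomm (hP : IsCliffordSystem l s m r P) {i j : ℕ} (hi : i ∈ Icc 1 m)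
    (hj : j ∈ Icc 1 m) (hij : i ≠ j) : P i * P j = -(P j * P i) := by
  have h := hP.2 i hi j hj
  rw [cliffEta, if_neg hij, mul_zero, zero_smul] at h
  exact eq_neg_of_add_eq_zero_left h

theorem mul_self (hP : IsCliffordSystem l s m r P) {i : ℕ} (hi : i ∈ Icc 1 m) :
    P i * P i = (if i ≤ r then -1 else 1 : ℝ) • 1 := by
  have h := hP.2 i hi i hi
  rw [← two_smul ℝ, cliffEta, if_pos rfl, mul_smul] at h
  exact smul_right_injective _ two_ne_zero h

theorem mul_self_of_lt (hP : IsCliffordSystem l s m r P) {i : ℕ} (hri : r < i) (him : i ≤ m) :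
    P i * P i = 1 := by
  rw [hP.mul_self (mem_Icc.mpr ⟨by omega, him⟩), if_neg (by omega), one_smul]

theorem mul_cliffordProd_of_lt (hP : IsCliffordSystem l s m r P) {j k : ℕ} (hkj : k < j)
    (hjm : j ≤ m) : P j * cliffordProd P k = (-1 : ℝ) ^ k • (cliffordProd P k * P j) := by
  induction k with
  | zero => simp [cliffordProd_zero]
  | succ k ih =>
    rw [cliffordProd_succ, ← Matrix.mul_assoc, ih (by omega), smul_mul_assoc, Matrix.mul_assoc,
      hP.anticomm (mem_Icc.mpr ⟨by omega, hjm⟩) (mem_Icc.mpr ⟨by omega, by omega⟩) (by omega),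
      Matrix.mul_neg, smul_neg, pow_succ, mul_neg_one, neg_smul, Matrix.mul_assoc]

theorem mul_cliffordProd_of_le (hP : IsCliffordSystem l s m r P) {j k : ℕ} (hj : 1 ≤ j)
    (hjk : j ≤ k) (hkm : k ≤ m) :
    P j * cliffordProd P k = (-1 : ℝ) ^ (k - 1) • (cliffordProd P k * P j) := by
  induction k, hjk using Nat.le_induction with
  | base =>
    obtain ⟨j, rfl⟩ : ∃ i, j = i + 1 := ⟨j - 1, by omega⟩
    rw [cliffordProd_succ, ← Matrix.mul_assoc, hP.mul_cliffordProd_of_lt (by omega) hkm,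
      smul_mul_assoc, Nat.add_sub_cancel]
  | succ k hjk ih =>
    rw [cliffordProd_succ, ← Matrix.mul_assoc, ih (by omega), smul_mul_assoc, Matrix.mul_assoc,
      hP.anticomm (mem_Icc.mpr ⟨hj, by omega⟩) (mem_Icc.mpr ⟨by omega, hkm⟩) (by omega),
      Matrix.mul_neg, smul_neg, ← neg_smul, ← Matrix.mul_assoc, Nat.add_sub_cancel,
      show k = k - 1 + 1 by omega, pow_succ, mul_neg_one]
    simp

theorem cliffordProd_mul_self (hP : IsCliffordSystem l s m r P) {k : ℕ} (hkm : k ≤ m) :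
    cliffordProd P k * cliffordProd P k = (-1 : ℝ) ^ (k.choose 2 + min k r) • 1 := by
  induction k with
  | zero => simp [cliffordProd_zero]
  | succ k ih =>
    rw [cliffordProd_succ, Matrix.mul_assoc, ← Matrix.mul_assoc (P (k + 1)),
      hP.mul_cliffordProd_of_lt (lt_add_one k) hkm, smul_mul_assoc, Matrix.mul_smul,
      ← Matrix.mul_assoc, ← Matrix.mul_assoc, Matrix.mul_assoc (cliffordProd P k * _),
      ih (by omega), hP.mul_self (mem_Icc.mpr ⟨by omega, hkm⟩), smul_mul_smul, Matrix.one_mul,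
      smul_smul, Nat.add_one_choose_two]
    congr 1
    split_ifs with h
    · rw [show min (k + 1) r = min k r + 1 by omega]; ring
    · rw [show min (k + 1) r = min k r by omega]; ring

theorem cliffordProd_transpose (hP : IsCliffordSystem l s m r P) {k : ℕ} (hkm : k ≤ m) :
    (cliffordProd P k)ᵀ
      = (-1 : ℝ) ^ k.choose 2 • (psJ (2 * l) s * cliffordProd P k * psJ (2 * l) s) := by
  induction k with
  | zero => simp [cliffordProd_zero, psJ_mul_psJ]
  | succ k ih =>
    have hJPJQJ : psJ (2 * l) s * P (k + 1) * psJ (2 * l) s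
        * (psJ (2 * l) s * cliffordProd P k * psJ (2 * l) s)
        = psJ (2 * l) s * (P (k + 1) * cliffordProd P k) * psJ (2 * l) s := by
      simp only [Matrix.mul_assoc]
      rw [← Matrix.mul_assoc (psJ (2 * l) s) (psJ (2 * l) s), psJ_mul_psJ, Matrix.one_mul]
    rw [cliffordProd_succ, transpose_mul, hP.1 (k + 1) (mem_Icc.mpr ⟨by omega, hkm⟩),
      ih (by omega), Matrix.mul_smul, hJPJQJ, hP.mul_cliffordProd_of_lt (lt_add_one k) hkm,
      Matrix.mul_smul, smul_mul_assoc, smul_smul, Nat.add_one_choose_two, pow_add,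
      Matrix.mul_assoc]

theorem cliffordProd_mul_cliffordProd (hP : IsCliffordSystem l s m r P) (hm4 : m % 4 = 0)
    (hr2 : r % 2 = 0) (hrm : r ≤ m) : cliffordProd P m * cliffordProd P m = 1 := by
  rw [hP.cliffordProd_mul_self (k := m) le_rfl, min_eq_right hrm,
    ((Nat.even_choose_two_of_mod_four hm4).add (Nat.even_iff.mpr hr2)).neg_one_pow, one_smul]

theorem isPsSelfAdjoint_cliffordProd (hP : IsCliffordSystem l s m r P) (hm4 : m % 4 = 0) :
    IsPsSelfAdjoint (2 * l) s (cliffordProd P m) := by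
  rw [IsPsSelfAdjoint, hP.cliffordProd_transpose (k := m) le_rfl,
    (Nat.even_choose_two_of_mod_four hm4).neg_one_pow, one_smul]

theorem mul_cliffordProd (hP : IsCliffordSystem l s m r P) (hm : Even m) {j : ℕ}
    (hj : j ∈ Icc 1 m) : P j * cliffordProd P m = -(cliffordProd P m * P j) := by
  obtain ⟨hj1, hjm⟩ := mem_Icc.mp hj
  have hodd : Odd (m - 1) := by
    obtain ⟨t, ht⟩ := hm
    exact ⟨t - 1, by omega⟩
  rw [hP.mul_cliffordProd_of_le hj1 hjm le_rfl, hodd.neg_one_pow, neg_one_smul]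

theorem psInner_projPlus_nonpos_or_one_le (hP : IsCliffordSystem l s m r P) (hm4 : m % 4 = 0)
    (hr2 : r % 2 = 0) (hrm : r ≤ m) (hdim : 2 * l < s + 2 * (m - r + 1)) {z : Fin (2 * l) → ℝ}
    (hz : z ∈ mPlus (2 * l) s m P) :
    psInner (2 * l) s (projPlus (cliffordProd P m) z) (projPlus (cliffordProd P m) z) ≤ 0 ∨
      1 ≤ psInner (2 * l) s (projPlus (cliffordProd P m) z) (projPlus (cliffordProd P m) z) := by
  have hA2 := hP.cliffordProd_mul_cliffordProd hm4 hr2 hrm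
  have hA := hP.isPsSelfAdjoint_cliffordProd hm4
  have hmem (i : Fin (m - r)) : r + 1 + i ∈ Icc 1 m := mem_Icc.mpr ⟨by omega, by omega⟩
  have := psInner_projPlus_nonpos_or_projMinus_nonpos (Q := fun i => P (r + 1 + i)) hdim hA2 hA
    (fun i => hP.1 _ (hmem i)) (fun i => hP.mul_self_of_lt (by omega) (by omega))
    (fun i j hij => hP.anticomm (hmem i) (hmem j) (by simpa [Fin.val_inj] using hij))
    (fun i => hP.mul_cliffordProd (Nat.even_iff.mpr (by omega)) (hmem i))
    (fun i => hz.2 _ (hmem i))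
  have hsum := psInner_self_eq_projPlus_add_projMinus hA2 hA z
  rw [hz.1] at hsum
  exact this.imp_right fun h => by linarith

theorem isPathConnected_mPlusOne (hP : IsCliffordSystem l s m r P) (hm4 : m % 4 = 0)
    (hr2 : r % 2 = 0) (hrm : r + 2 ≤ m) (hs : s < 2 * l) :
    IsPathConnected (mPlusOne (2 * l) s m P (cliffordProd P m)) :=
  _root_.isPathConnected_mPlusOne hs (hP.cliffordProd_mul_cliffordProd hm4 hr2 (by omega))
    (hP.isPsSelfAdjoint_cliffordProd hm4) hP.1
    (fun _ => hP.mul_cliffordProd (Nat.even_iff.mpr (by omega)))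
    (mem_Icc.mpr ⟨by omega, by omega⟩ : r + 1 ∈ Icc 1 m)
    (mem_Icc.mpr ⟨by omega, hrm⟩ : r + 2 ∈ Icc 1 m) (hP.mul_self_of_lt (by omega) (by omega))
    (hP.mul_self_of_lt (by omega) hrm)
    (hP.anticomm (mem_Icc.mpr ⟨by omega, by omega⟩) (mem_Icc.mpr ⟨by omega, hrm⟩) (by omega))

theorem isPathConnected_mPlusTwo (hP : IsCliffordSystem l s m r P) (hm4 : m % 4 = 0)
    (hr2 : r % 2 = 0) (hrm : r + 2 ≤ m) (hs : s < 2 * l) :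
    IsPathConnected (mPlusTwo (2 * l) s m P (cliffordProd P m)) :=
  _root_.isPathConnected_mPlusTwo hs (hP.cliffordProd_mul_cliffordProd hm4 hr2 (by omega))
    (hP.isPsSelfAdjoint_cliffordProd hm4) hP.1
    (fun _ => hP.mul_cliffordProd (Nat.even_iff.mpr (by omega)))
    (mem_Icc.mpr ⟨by omega, by omega⟩ : r + 1 ∈ Icc 1 m)
    (mem_Icc.mpr ⟨by omega, hrm⟩ : r + 2 ∈ Icc 1 m) (hP.mul_self_of_lt (by omega) (by omega))
    (hP.mul_self_of_lt (by omega) hrm)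
    (hP.anticomm (mem_Icc.mpr ⟨by omega, by omega⟩) (mem_Icc.mpr ⟨by omega, hrm⟩) (by omega))

end IsCliffordSystem

theorem Mplus_disconnected_cases_general (l s m r : ℕ) (hl : 0 < l) (hs : s ≤ 2 * l - 1)
    (hm4 : m % 4 = 0) (hr2 : r % 2 = 0)
    (P : ℕ → Matrix (Fin (2 * l)) (Fin (2 * l)) ℝ)
    (hP : IsCliffordSystem l s m r P)
    (Pm : Matrix (Fin (2 * l)) (Fin (2 * l)) ℝ)
    (hPm : Pm = ((List.range m).map fun k => P (1 + k)).prod)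
    (Mp : Set (Fin (2 * l) → ℝ))
    (hMp : Mp = {x | psInner (2 * l) s x x = 1 ∧
      ∀ j ∈ Finset.Icc 1 m, psInner (2 * l) s (P j *ᵥ x) x = 0})
    (zpl : (Fin (2 * l) → ℝ) → (Fin (2 * l) → ℝ))
    (hzpl : zpl = fun z => (1 / 2 : ℝ) • (z + Pm *ᵥ z))
    (M1 M2 M3 : Set (Fin (2 * l) → ℝ))
    (hM1 : M1 = {z ∈ Mp | 1 ≤ psInner (2 * l) s (zpl z) (zpl z)})
    (hM2 : M2 = {z ∈ Mp | psInner (2 * l) s (zpl z) (zpl z) ≤ 0})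
    (hM3 : M3 = {z ∈ Mp | 0 < psInner (2 * l) s (zpl z) (zpl z) ∧
      psInner (2 * l) s (zpl z) (zpl z) < 1})
    (hcase : (r = 0 ∧ s + 2 * m = 2 * l) ∨
      (2 ≤ r ∧ r + 2 ≤ m ∧ s = l ∧ l = 2 * (m - r) ∧ 0 < m - r)) :
    ¬ IsPreconnected Mp ∧ M3 = ∅ ∧ Mp = M1 ∪ M2 ∧
    M1.Nonempty ∧ M2.Nonempty ∧ IsPathConnected M1 ∧ IsPathConnected M2 ∧
    (∀ z ∈ M1, connectedComponentIn Mp z = M1) ∧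
    (∀ z ∈ M2, connectedComponentIn Mp z = M2) := by
  obtain rfl : Pm = cliffordProd P m := hPm
  obtain rfl : zpl = projPlus (cliffordProd P m) := hzpl
  obtain rfl : Mp = mPlus (2 * l) s m P := hMp
  obtain rfl : M1 = mPlusOne (2 * l) s m P (cliffordProd P m) := hM1
  obtain rfl : M2 = mPlusTwo (2 * l) s m P (cliffordProd P m) := hM2
  subst hM3
  have hrm : r + 2 ≤ m := by omega
  have hgap (z) (hz : z ∈ mPlus (2 * l) s m P) :=
    hP.psInner_projPlus_nonpos_or_one_le hm4 hr2 (by omega) (by omega) hz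
  have hf := (continuous_psInner_projPlus (n := 2 * l) (s := s)
    (A := cliffordProd P m)).continuousOn (s := mPlus (2 * l) s m P)
  have h1 := hP.isPathConnected_mPlusOne hm4 hr2 hrm (by omega)
  have h2 := hP.isPathConnected_mPlusTwo hm4 hr2 hrm (by omega)
  obtain ⟨x, hx⟩ := h1.nonempty
  obtain ⟨y, hy⟩ := h2.nonempty
  refine ⟨not_isPreconnected_of_forall_le_or_le hf zero_lt_one hgap hy.1 hy.2 hx.1 hx.2, ?_, ?_,
    ⟨x, hx⟩, ⟨y, hy⟩, h1, h2,
    fun z => connectedComponentIn_eq_of_forall_le_or_le' hf one_pos hgap h1.isConnected.2,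
    fun z => connectedComponentIn_eq_of_forall_le_or_le hf one_pos hgap h2.isConnected.2⟩
  · refine Set.eq_empty_of_forall_notMem fun z ⟨hz, h0, h1⟩ => ?_
    rcases hgap z hz with h | h <;> linarith
  · ext z
    refine ⟨fun hz => (hgap z hz).symm.imp (⟨hz, ·⟩) (⟨hz, ·⟩), ?_⟩
    rintro (hz | hz) <;> exact hz.1

/-- with `m ≡ 0 (mod 4)`, `r ≡ 0 (mod 2)`, `s ≤ 2l - 1`,
`P = P_1 ⋯ P_m`, in the cases (a) `r = 0` and `s = 2(l - m)`, or
(b) `r ∈ {2, 4, …, m-2}`, `s = l` and `l = 2(m - r) > 0`: `M₊` is disconnected,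
`M₊,₃ = ∅`, `M₊,₁` and `M₊,₂` are non-empty and path-connected, and the connected
components of `M₊` are exactly `M₊,₁` and `M₊,₂`. -/
theorem Mplus_disconnected_cases (l s m r : ℕ) (hl : 0 < l) (hs : s ≤ 2 * l - 1)
    (hm : 2 ≤ m) (hm4 : m % 4 = 0) (hr : r ≤ m) (hr2 : r % 2 = 0)
    (P : ℕ → Matrix (Fin (2 * l)) (Fin (2 * l)) ℝ)
    (hP : IsCliffordSystem l s m r P)
    (Pm : Matrix (Fin (2 * l)) (Fin (2 * l)) ℝ)
    (hPm : Pm = ((List.range m).map fun k => P (1 + k)).prod)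
    (Mp : Set (Fin (2 * l) → ℝ))
    (hMp : Mp = {x | psInner (2 * l) s x x = 1 ∧
      ∀ j ∈ Finset.Icc 1 m, psInner (2 * l) s (P j *ᵥ x) x = 0})
    (zpl : (Fin (2 * l) → ℝ) → (Fin (2 * l) → ℝ))
    (hzpl : zpl = fun z => (1 / 2 : ℝ) • (z + Pm *ᵥ z))
    (M1 M2 M3 : Set (Fin (2 * l) → ℝ))
    (hM1 : M1 = {z ∈ Mp | 1 ≤ psInner (2 * l) s (zpl z) (zpl z)})
    (hM2 : M2 = {z ∈ Mp | psInner (2 * l) s (zpl z) (zpl z) ≤ 0})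
    (hM3 : M3 = {z ∈ Mp | 0 < psInner (2 * l) s (zpl z) (zpl z) ∧
      psInner (2 * l) s (zpl z) (zpl z) < 1})
    (hcase : (r = 0 ∧ s + 2 * m = 2 * l) ∨
      (2 ≤ r ∧ r + 2 ≤ m ∧ s = l ∧ l = 2 * (m - r) ∧ 0 < m - r)) :
    ¬ IsPreconnected Mp ∧ M3 = ∅ ∧ Mp = M1 ∪ M2 ∧
    M1.Nonempty ∧ M2.Nonempty ∧ IsPathConnected M1 ∧ IsPathConnected M2 ∧
    (∀ z ∈ M1, connectedComponentIn Mp z = M1) ∧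
    (∀ z ∈ M2, connectedComponentIn Mp z = M2) :=
  Mplus_disconnected_cases_general l s m r hl hs hm4 hr2 P hP Pm hPm Mp hMp zpl hzpl M1 M2 M3 hM1
    hM2 hM3 hcase
end
end

section
/- Let P_1, …, P_m be a Clifford system of signature (m, r) on ℝ^{2l}_s with m ≡ 0 (mod 4), r = m, and s = l ≤ 2l − 1, and set P := P_1P_2⋯P_m. If the restriction of ⟨·,·⟩ to E_+(P) is positive definite (case (c-1), i.e. (s₁, s₂) = (0, l)), then M_+ = M_{+,1} and M_+ is connected. If instead the restriction of ⟨·,·⟩ to E_+(P) is negative definite (case (c-2), i.e. (s₁, s₂) = (l, 0)), then M_+ = M_{+,2} and M_+ is connected. -/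
open Matrix

noncomputable section

/-!
`P = P₁ ⋯ P_m` is an involution (as `m ≡ 0 mod 4`) which preserves `⟨·,·⟩` and anticommutes
with every `P_j` (as `m` is even). Hence `E₊(P) ⊥ E₋(P)`, and every `P_j` swaps `E₊(P)` and `E₋(P)`
while reversing the sign of `⟨w, w⟩` (it is symmetric with `P_j² = -1`). So if `⟨·,·⟩` is
positive definite on `E₊(P)`, it is negative semidefinite on `E₋(P)`, and on `M₊` we get
`⟨z₊, z₊⟩ = 1 - ⟨z₋, z₋⟩ ≥ 1`.

The equations `⟨P_j z, z⟩ = 2 ⟨P_j z₊, z₋⟩ = 0` of `M₊` survive rescaling `z₊` and `z₋`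
independently, so shrinking `z₋` to `0` joins every point of `M₊` inside `M₊` to the unit sphere
of `E₊(P)`. That sphere lies in `M₊` and is connected: for each of its points `x`, `P₁ P₂ x` is a
point of it orthogonal to `x`. Case (c-2) is case (c-1) for the involution `-P`.
-/

section AnticommutingProducts

variable {R ι : Type*} [Ring R]

theorem neg_mul_eq_neg_mul_neg_of_anticomm {a b : R} (h : a * b = -(b * a)) :
    -a * b = -(b * -a) := by
  rw [neg_mul, h, mul_neg]

variable [DecidableEq ι] (e : ι → R)

theorem list_prod_map_mul_eq_zsmul (L : List ι) (j : ι)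
    (h : ∀ i ∈ L, i ≠ j → e i * e j = -(e j * e i)) :
    (L.map e).prod * e j = (-1 : ℤ) ^ (L.length + L.count j) • (e j * (L.map e).prod) := by
  induction L with
  | nil => simp
  | cons a L ih =>
    rw [List.map_cons, List.prod_cons, mul_assoc, ih fun i hi => h i (.tail a hi),
      mul_smul_comm, ← mul_assoc, ← mul_assoc, List.length_cons, List.count_cons]
    by_cases haj : a = j
    · subst haj
      rw [beq_self_eq_true, if_pos rfl, add_add_add_comm, pow_add _ _ (1 + 1)]
      simp
    · rw [h a List.mem_cons_self haj, beq_false_of_ne haj, if_neg Bool.false_ne_true,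
        add_zero, add_right_comm, pow_succ]
      simp

theorem list_prod_map_mul_self (L : List ι) (hL : L.Nodup) (hsq : ∀ i ∈ L, e i * e i = -1)
    (hanti : ∀ i ∈ L, ∀ j ∈ L, i ≠ j → e i * e j = -(e j * e i)) :
    (L.map e).prod * (L.map e).prod = (-1) ^ (L.length + 1).choose 2 := by
  induction L with
  | nil => simp
  | cons a L ih =>
    obtain ⟨haL, hL⟩ := List.nodup_cons.mp hL
    have hswap := list_prod_map_mul_eq_zsmul e L a fun i hi hia =>
      hanti i (.tail a hi) a List.mem_cons_self hia
    rw [List.count_eq_zero_of_not_mem haL, add_zero] at hswap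
    rw [List.map_cons, List.prod_cons, mul_assoc, ← mul_assoc _ (e a), hswap, smul_mul_assoc,
      mul_smul_comm, ← mul_assoc, ← mul_assoc, hsq a List.mem_cons_self, mul_assoc,
      ih hL (fun i hi => hsq i (.tail a hi)) fun i hi j hj => hanti i (.tail a hi) j (.tail a hj),
      List.length_cons, Nat.choose_succ_succ' (L.length + 1), Nat.choose_one_right]
    simp [pow_add, pow_succ]

end AnticommutingProducts

theorem even_choose_two_succ_of_mod_four {n : ℕ} (hn : n % 4 = 0) : Even ((n + 1).choose 2) := by
  obtain ⟨k, rfl⟩ := Nat.dvd_of_mod_eq_zero hn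
  have h : (4 * k + 1) * (4 * k) = (4 * k + 1).choose 2 * 2 := by
    simpa using Nat.add_one_mul_choose_eq (4 * k) 1
  refine ⟨k * (4 * k + 1), Nat.eq_of_mul_eq_mul_right two_pos ?_⟩
  rw [← h]
  ring

open LinearMap (BilinForm)

section BilinearForm

variable {V ι : Type*} [AddCommGroup V] [Module ℝ V] {B : BilinForm ℝ V}

theorem bilin_list_prod_map_apply_apply (e : ι → Module.End ℝ V) (L : List ι)
    (h : ∀ i ∈ L, ∀ u v, B (e i u) (e i v) = -B u v) (u v : V) :
    B ((L.map e).prod u) ((L.map e).prod v) = (-1) ^ L.length * B u v := by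
  induction L generalizing u v with
  | nil => simp
  | cons a L ih =>
    simp only [List.map_cons, List.prod_cons, Module.End.mul_apply, List.length_cons]
    rw [h a List.mem_cons_self, ih fun i hi => h i (.tail a hi), pow_succ]
    ring

/-- `plusPart Q x` and `plusPart (-Q) x` are the components `x₊`, `x₋` of `x` in the
`±1`-eigenspaces of an involution `Q`. -/
def plusPart (Q : Module.End ℝ V) (x : V) : V := (1 / 2 : ℝ) • (x + Q x)

theorem plusPart_add_plusPart_neg (Q : Module.End ℝ V) (x : V) :
    plusPart Q x + plusPart (-Q) x = x := by
  simp only [plusPart, LinearMap.neg_apply]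
  module

theorem apply_plusPart {Q : Module.End ℝ V} (hQ : Q * Q = 1) (x : V) :
    Q (plusPart Q x) = plusPart Q x := by
  rw [plusPart, map_smul, map_add, ← Module.End.mul_apply, hQ, Module.End.one_apply, add_comm]

theorem apply_plusPart_neg {Q : Module.End ℝ V} (hQ : Q * Q = 1) (x : V) :
    Q (plusPart (-Q) x) = -plusPart (-Q) x := by
  have h := apply_plusPart (Q := -Q) (by rwa [neg_mul_neg]) x
  rw [LinearMap.neg_apply] at h
  exact neg_eq_iff_eq_neg.mp h

theorem bilin_plusPart_self_nonpos {Q : Module.End ℝ V} (hQ : Q * Q = 1)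
    (hneg : ∀ z, Q z = z → z ≠ 0 → B z z < 0) (x : V) :
    B (plusPart Q x) (plusPart Q x) ≤ 0 := by
  rcases eq_or_ne (plusPart Q x) 0 with h | h
  · simp [h]
  · exact (hneg _ (apply_plusPart hQ x) h).le

theorem apply_eq_neg_of_anticomm {Q A : Module.End ℝ V} (hA : Q * A = -(A * Q)) {u : V}
    (hu : Q u = u) : Q (A u) = -A u := by
  rw [← Module.End.mul_apply, hA, LinearMap.neg_apply, Module.End.mul_apply, hu]

theorem apply_eq_self_of_anticomm {Q A : Module.End ℝ V} (hA : Q * A = -(A * Q)) {v : V}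
    (hv : Q v = -v) : Q (A v) = A v := by
  rw [← Module.End.mul_apply, hA, LinearMap.neg_apply, Module.End.mul_apply, hv, map_neg, neg_neg]

structure IsIsometricInvolution (B : BilinForm ℝ V) (Q : Module.End ℝ V) : Prop where
  mul_self : Q * Q = 1
  isometry : ∀ u v, B (Q u) (Q v) = B u v

namespace IsIsometricInvolution

variable {Q : Module.End ℝ V} (hQ : IsIsometricInvolution B Q)
include hQ

theorem neg : IsIsometricInvolution B (-Q) where
  mul_self := by rw [neg_mul_neg, hQ.mul_self]
  isometry u v := by simp [hQ.isometry]

theorem bilin_eq_zero {u v : V} (hu : Q u = u) (hv : Q v = -v) : B u v = 0 ∧ B v u = 0 := by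
  have h₁ := hQ.isometry u v
  have h₂ := hQ.isometry v u
  simp only [hu, hv, map_neg, LinearMap.neg_apply] at h₁ h₂
  constructor <;> linarith

theorem bilin_smul_plusPart_add (x : V) (a b : ℝ) :
    B (a • plusPart Q x + b • plusPart (-Q) x) (a • plusPart Q x + b • plusPart (-Q) x)
      = a ^ 2 * B (plusPart Q x) (plusPart Q x)
        + b ^ 2 * B (plusPart (-Q) x) (plusPart (-Q) x) := by
  obtain ⟨h₁, h₂⟩ := hQ.bilin_eq_zero (apply_plusPart hQ.mul_self x)
    (apply_plusPart_neg hQ.mul_self x)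
  simp only [map_add, map_smul, LinearMap.add_apply, LinearMap.smul_apply, smul_eq_mul, h₁, h₂]
  ring

theorem bilin_self_eq (x : V) :
    B x x = B (plusPart Q x) (plusPart Q x) + B (plusPart (-Q) x) (plusPart (-Q) x) := by
  simpa [plusPart_add_plusPart_neg] using hQ.bilin_smul_plusPart_add x 1 1

theorem one_le_bilin_plusPart (hneg : ∀ w, Q w = -w → B w w ≤ 0) {z : V} (hz : B z z = 1) :
    1 ≤ B (plusPart Q z) (plusPart Q z) := by
  linarith [hQ.bilin_self_eq z, hneg _ (apply_plusPart_neg hQ.mul_self z)]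

theorem bilin_apply_smul_plusPart_add {A : Module.End ℝ V} (hA : Q * A = -(A * Q)) (x : V)
    (a b : ℝ) :
    B (A (a • plusPart Q x + b • plusPart (-Q) x)) (a • plusPart Q x + b • plusPart (-Q) x)
      = a * b * B (A x) x := by
  have hu := apply_plusPart hQ.mul_self x
  have hv := apply_plusPart_neg hQ.mul_self x
  have h₁ := (hQ.bilin_eq_zero hu (apply_eq_neg_of_anticomm hA hu)).2
  have h₂ := (hQ.bilin_eq_zero (apply_eq_self_of_anticomm hA hv) hv).1
  conv_rhs => rw [← plusPart_add_plusPart_neg Q x]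
  simp only [map_add, map_smul, LinearMap.add_apply, LinearMap.smul_apply, smul_eq_mul, h₁, h₂]
  ring

end IsIsometricInvolution

def unitSphere (B : BilinForm ℝ V) (W : Submodule ℝ V) : Set V := {x | x ∈ W ∧ B x x = 1}

theorem inv_sqrt_smul_mem_unitSphere {W : Submodule ℝ V} {y : V} (hy : y ∈ W)
    (hpos : 0 < B y y) : (√(B y y))⁻¹ • y ∈ unitSphere B W := by
  refine ⟨W.smul_mem _ hy, ?_⟩
  rw [map_smul, map_smul, LinearMap.smul_apply, smul_eq_mul, smul_eq_mul, ← mul_assoc, ← mul_inv,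
    Real.mul_self_sqrt hpos.le, inv_mul_cancel₀ hpos.ne']

theorem mem_eigenspace_one_iff {Q : Module.End ℝ V} {x : V} :
    x ∈ Q.eigenspace 1 ↔ Q x = x := by
  rw [Module.End.mem_eigenspace_iff, one_smul]

/-- An abstract Clifford system of signature `(m, m)`, indexed by `J`. -/
structure IsNegCliffordFamily (B : BilinForm ℝ V) (P : ι → Module.End ℝ V) (J : Set ι) :
    Prop where
  isSelfAdjoint : ∀ i ∈ J, B.IsSelfAdjoint (P i)
  mul_self : ∀ i ∈ J, P i * P i = -1
  anticomm : ∀ i ∈ J, ∀ j ∈ J, i ≠ j → P i * P j = -(P j * P i)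

namespace IsNegCliffordFamily

variable {P : ι → Module.End ℝ V} {J : Set ι} (hP : IsNegCliffordFamily B P J)
include hP

theorem apply_apply {i : ι} (hi : i ∈ J) (u v : V) : B (P i u) (P i v) = -B u v := by
  rw [hP.isSelfAdjoint i hi, ← Module.End.mul_apply, hP.mul_self i hi]
  simp

theorem apply_ne_zero {i : ι} (hi : i ∈ J) {v : V} (hv : v ≠ 0) : P i v ≠ 0 := by
  intro h
  apply hv
  simpa [h] using congr($(hP.mul_self i hi) v)

theorem bilin_apply_apply_self_eq_zero (hB : B.IsSymm) {i j : ι} (hi : i ∈ J) (hj : j ∈ J)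
    (hij : i ≠ j) (x : V) : B x (P i (P j x)) = 0 := by
  have h := congr(B ($(hP.anticomm i hi j hj hij) x) x)
  rw [Module.End.mul_apply, LinearMap.neg_apply, Module.End.mul_apply, map_neg,
    LinearMap.neg_apply, hP.isSelfAdjoint i hi (P j x), hP.isSelfAdjoint j hj (P i x)] at h
  rw [← hP.isSelfAdjoint i hi]
  linarith [hB.eq (P i x) (P j x)]

theorem exists_orthogonal_mem_unitSphere_eigenspace_one {Q : Module.End ℝ V} (hB : B.IsSymm)
    {i₁ i₂ : ι} (h₁ : i₁ ∈ J) (h₂ : i₂ ∈ J) (h₁₂ : i₁ ≠ i₂) (hQ₁ : Q * P i₁ = -(P i₁ * Q))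
    (hQ₂ : Q * P i₂ = -(P i₂ * Q)) {x : V} (hx : x ∈ unitSphere B (Q.eigenspace 1)) :
    ∃ y ∈ unitSphere B (Q.eigenspace 1), B x y = 0 := by
  obtain ⟨hxQ, hx⟩ := hx
  rw [mem_eigenspace_one_iff] at hxQ
  refine ⟨P i₁ (P i₂ x), ⟨mem_eigenspace_one_iff.2 ?_, ?_⟩,
    hP.bilin_apply_apply_self_eq_zero hB h₁ h₂ h₁₂ x⟩
  · exact apply_eq_self_of_anticomm hQ₁ (apply_eq_neg_of_anticomm hQ₂ hxQ)
  · rw [hP.apply_apply h₁, hP.apply_apply h₂, hx, neg_neg]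

section Swap

variable {Q : Module.End ℝ V} {i : ι} (hi : i ∈ J) (hQP : Q * P i = -(P i * Q))
include hi hQP

theorem bilin_self_nonpos_of_pos (hpos : ∀ z, Q z = z → z ≠ 0 → 0 < B z z) {w : V}
    (hw : Q w = -w) : B w w ≤ 0 := by
  rcases eq_or_ne w 0 with rfl | hw0
  · simp
  have := hpos _ (apply_eq_self_of_anticomm hQP hw) (hP.apply_ne_zero hi hw0)
  rw [hP.apply_apply hi] at this
  linarith

theorem bilin_self_pos_of_neg (hneg : ∀ z, Q z = z → z ≠ 0 → B z z < 0) {w : V}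
    (hw : Q w = -w) (hw0 : w ≠ 0) : 0 < B w w := by
  have := hneg _ (apply_eq_self_of_anticomm hQP hw) (hP.apply_ne_zero hi hw0)
  rw [hP.apply_apply hi] at this
  linarith

theorem exists_apply_eq_self_ne_zero [Nontrivial V] (hQ : Q * Q = 1) :
    ∃ x, Q x = x ∧ x ≠ 0 := by
  obtain ⟨v, hv⟩ := exists_ne (0 : V)
  by_cases h : plusPart Q v = 0
  · rw [← plusPart_add_plusPart_neg Q v, h, zero_add] at hv
    exact ⟨_, apply_eq_self_of_anticomm hQP (apply_plusPart_neg hQ v), hP.apply_ne_zero hi hv⟩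
  · exact ⟨_, apply_plusPart hQ v, h⟩

end Swap

section ListProd

variable [DecidableEq ι] {L : List ι} (hLJ : ∀ i ∈ L, i ∈ J) (hL : L.Nodup)
include hLJ hL

theorem isIsometricInvolution_list_prod (h4 : L.length % 4 = 0) :
    IsIsometricInvolution B (L.map P).prod where
  mul_self := by
    rw [list_prod_map_mul_self P L hL (fun i hi => hP.mul_self i (hLJ i hi))
      fun i hi j hj => hP.anticomm i (hLJ i hi) j (hLJ j hj),
      (even_choose_two_succ_of_mod_four h4).neg_one_pow]
  isometry u v := by
    rw [bilin_list_prod_map_apply_apply P L (fun i hi => hP.apply_apply (hLJ i hi)),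
      Even.neg_one_pow (Nat.even_iff.mpr (by omega)), one_mul]

theorem list_prod_mul_anticomm (h2 : Even L.length) {j : ι} (hj : j ∈ L) :
    (L.map P).prod * P j = -(P j * (L.map P).prod) := by
  rw [list_prod_map_mul_eq_zsmul P L j fun i hi hij => hP.anticomm i (hLJ i hi) j (hLJ j hj) hij,
    List.count_eq_one_of_mem hL hj, (h2.add_one).neg_one_pow, neg_one_smul]

end ListProd

end IsNegCliffordFamily

section Topology

variable [TopologicalSpace V] [ContinuousAdd V] [ContinuousSMul ℝ V]

theorem joinedIn_unitSphere_of_nonneg (hB : B.IsSymm) {W : Submodule ℝ V} {x w : V}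
    (hx : x ∈ unitSphere B W) (hw : w ∈ unitSphere B W) (hxw : 0 ≤ B x w) :
    JoinedIn (unitSphere B W) x w := by
  set seg : ℝ → V := fun t => (1 - t) • x + t • w
  have hseg : ∀ t, B (seg t) (seg t) = (1 - t) ^ 2 + 2 * ((1 - t) * t) * B x w + t ^ 2 := by
    intro t
    simp only [seg, map_add, map_smul, LinearMap.add_apply, LinearMap.smul_apply, smul_eq_mul,
      hx.2, hw.2, hB.eq w x]
    ring
  have hpos : ∀ t ∈ unitInterval, 0 < B (seg t) (seg t) := by
    rintro t ⟨h0, h1⟩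
    rw [hseg]
    nlinarith [mul_nonneg (mul_nonneg (sub_nonneg.2 h1) h0) hxw, sq_nonneg (2 * t - 1)]
  refine JoinedIn.ofLine (f := fun t => (√(B (seg t) (seg t)))⁻¹ • seg t) ?_ ?_ ?_ ?_
  · simp only [hseg]
    refine ContinuousOn.smul (ContinuousOn.inv₀ (by fun_prop) fun t ht => ?_) (by fun_prop)
    rw [← hseg]
    exact (Real.sqrt_pos.2 (hpos t ht)).ne'
  · simp [seg, hx.2]
  · simp [seg, hw.2]
  · rintro _ ⟨t, ht, rfl⟩
    exact inv_sqrt_smul_mem_unitSphere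
      (W.add_mem (W.smul_mem _ hx.1) (W.smul_mem _ hw.1)) (hpos t ht)

theorem isPathConnected_unitSphere (hB : B.IsSymm) {W : Submodule ℝ V}
    (hne : (unitSphere B W).Nonempty)
    (horth : ∀ x ∈ unitSphere B W, ∃ y ∈ unitSphere B W, B x y = 0) :
    IsPathConnected (unitSphere B W) := by
  refine isPathConnected_iff.2 ⟨hne, fun x hx w hw => ?_⟩
  obtain ⟨y, hy, hxy⟩ := horth x hx
  have hy' : -y ∈ unitSphere B W := ⟨W.neg_mem hy.1, by simpa using hy.2⟩
  rcases le_total 0 (B y w) with h | h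
  · exact (joinedIn_unitSphere_of_nonneg hB hx hy hxy.ge).trans
      (joinedIn_unitSphere_of_nonneg hB hy hw h)
  · exact (joinedIn_unitSphere_of_nonneg hB hx hy' (by simp [hxy])).trans
      (joinedIn_unitSphere_of_nonneg hB hy' hw (by simpa using h))

end Topology

/-- The set `M₊` of the paper. -/
def focalSet (B : BilinForm ℝ V) (P : ι → Module.End ℝ V) (J : Set ι) : Set V :=
  {x | B x x = 1 ∧ ∀ j ∈ J, B (P j x) x = 0}

section FocalSet

variable {Q : Module.End ℝ V} {P : ι → Module.End ℝ V} {J : Set ι}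
  (hQ : IsIsometricInvolution B Q) (hQP : ∀ j ∈ J, Q * P j = -(P j * Q))
include hQ hQP

theorem smul_plusPart_add_mem_focalSet {x : V} (hx : x ∈ focalSet B P J) {a b : ℝ}
    (hab : a ^ 2 * B (plusPart Q x) (plusPart Q x)
      + b ^ 2 * B (plusPart (-Q) x) (plusPart (-Q) x) = 1) :
    a • plusPart Q x + b • plusPart (-Q) x ∈ focalSet B P J :=
  ⟨(hQ.bilin_smul_plusPart_add x a b).trans hab, fun j hj => by
    rw [hQ.bilin_apply_smul_plusPart_add (hQP j hj), hx.2 j hj, mul_zero]⟩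

theorem unitSphere_eigenspace_one_subset_focalSet :
    unitSphere B (Q.eigenspace 1) ⊆ focalSet B P J := by
  rintro x ⟨hxQ, hx⟩
  rw [mem_eigenspace_one_iff] at hxQ
  exact ⟨hx, fun j hj => (hQ.bilin_eq_zero hxQ (apply_eq_neg_of_anticomm (hQP j hj) hxQ)).2⟩

variable [TopologicalSpace V] [ContinuousAdd V] [ContinuousSMul ℝ V]

theorem exists_joinedIn_focalSet_unitSphere (hneg : ∀ w, Q w = -w → B w w ≤ 0) {z : V}
    (hz : z ∈ focalSet B P J) :
    ∃ y ∈ unitSphere B (Q.eigenspace 1), JoinedIn (focalSet B P J) z y := by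
  set a := B (plusPart Q z) (plusPart Q z)
  set b := B (plusPart (-Q) z) (plusPart (-Q) z)
  have hab : a + b = 1 := (hQ.bilin_self_eq z).symm.trans hz.1
  have hb : b ≤ 0 := hneg _ (apply_plusPart_neg hQ.mul_self z)
  have ha : 0 < a := by linarith
  -- shrink `z₋` linearly to `0`, rescaling `z₊` so as to stay on `B z z = 1`
  set c : ℝ → ℝ := fun t => (√a)⁻¹ * √(1 - (1 - t) ^ 2 * b)
  have hc : ∀ t, c t ^ 2 * a + (1 - t) ^ 2 * b = 1 := by
    intro t
    rw [mul_pow, inv_pow, Real.sq_sqrt ha.le, Real.sq_sqrt (by nlinarith [sq_nonneg (1 - t)])]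
    field_simp
    ring
  refine ⟨(√a)⁻¹ • plusPart Q z,
    inv_sqrt_smul_mem_unitSphere (mem_eigenspace_one_iff.2 (apply_plusPart hQ.mul_self z)) ha,
    JoinedIn.ofLine (f := fun t => c t • plusPart Q z + (1 - t) • plusPart (-Q) z)
      (by fun_prop) ?_ ?_ ?_⟩
  · have hc0 : c 0 = 1 := by
      have h : 1 - (1 - 0 : ℝ) ^ 2 * b = a := by norm_num; linarith
      simp only [c, h]
      exact inv_mul_cancel₀ (Real.sqrt_pos.2 ha).ne'
    simp only [hc0, sub_zero, one_smul, plusPart_add_plusPart_neg]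
  · simp [c]
  · rintro _ ⟨t, -, rfl⟩
    exact smul_plusPart_add_mem_focalSet hQ hQP hz (hc t)

theorem isPathConnected_focalSet [Nontrivial V] (hB : B.IsSymm)
    (hP : IsNegCliffordFamily B P J) {i₁ i₂ : ι} (h₁ : i₁ ∈ J) (h₂ : i₂ ∈ J) (h₁₂ : i₁ ≠ i₂)
    (hpos : ∀ z, Q z = z → z ≠ 0 → 0 < B z z) :
    IsPathConnected (focalSet B P J) := by
  have hsphere : IsPathConnected (unitSphere B (Q.eigenspace 1)) := by
    refine isPathConnected_unitSphere hB ?_ fun x hx =>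
      hP.exists_orthogonal_mem_unitSphere_eigenspace_one hB h₁ h₂ h₁₂ (hQP i₁ h₁) (hQP i₂ h₂) hx
    obtain ⟨x, hxQ, hx0⟩ := hP.exists_apply_eq_self_ne_zero h₁ (hQP i₁ h₁) hQ.mul_self
    exact ⟨_, inv_sqrt_smul_mem_unitSphere (mem_eigenspace_one_iff.2 hxQ) (hpos x hxQ hx0)⟩
  have hsub := unitSphere_eigenspace_one_subset_focalSet (P := P) hQ hQP
  obtain ⟨x₀, hx₀⟩ := hsphere.nonempty
  refine ⟨x₀, hsub hx₀, fun z hz => ?_⟩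
  obtain ⟨y, hy, hzy⟩ := exists_joinedIn_focalSet_unitSphere hQ hQP
    (fun w => hP.bilin_self_nonpos_of_pos h₁ (hQP i₁ h₁) hpos) hz
  exact ((hsphere.joinedIn x₀ hx₀ y hy).mono hsub).trans hzy.symm

end FocalSet

end BilinearForm

theorem psJ_mul_self (n s : ℕ) : psJ n s * psJ n s = 1 := by
  rw [psJ, diagonal_mul_diagonal, ← diagonal_one]
  congr 1
  ext i
  split_ifs <;> norm_num

theorem psInner_eq_toBilin' (n s : ℕ) (u v : Fin n → ℝ) :
    psInner n s u v = (psJ n s).toBilin' u v :=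
  (Matrix.toBilin'_apply' _ _ _).symm

theorem isSymm_toBilin'_psJ (n s : ℕ) : (psJ n s).toBilin'.IsSymm :=
  Matrix.isSymm_toBilin'_iff_isSymm.2 (Matrix.isSymm_diagonal _)

theorem isSelfAdjoint_toLinAlgEquiv' {n s : ℕ} {A : Matrix (Fin n) (Fin n) ℝ}
    (hA : Aᵀ = psJ n s * A * psJ n s) :
    (psJ n s).toBilin'.IsSelfAdjoint (Matrix.toLinAlgEquiv' A) := by
  intro u v
  simp only [Matrix.toBilin'_apply', Matrix.toLinAlgEquiv'_apply]
  rw [dotProduct_comm, dotProduct_mulVec, ← mulVec_transpose, dotProduct_comm, hA,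
    mulVec_mulVec, Matrix.mul_assoc, psJ_mul_self, Matrix.mul_one, mulVec_mulVec]

theorem mem_range'_one_iff_mem_Icc {m i : ℕ} : i ∈ List.range' 1 m ↔ i ∈ Finset.Icc 1 m := by
  rw [List.mem_range'_1, Finset.mem_Icc]
  omega

theorem toLinAlgEquiv'_list_prod_map_range {n m : ℕ} (P : ℕ → Matrix (Fin n) (Fin n) ℝ) :
    Matrix.toLinAlgEquiv' ((List.range m).map fun k => P (1 + k)).prod
      = ((List.range' 1 m).map fun i => Matrix.toLinAlgEquiv' (P i)).prod := by
  rw [map_list_prod, List.range'_eq_map_range, List.map_map, List.map_map]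
  rfl

namespace IsCliffordSystem

variable {l s m : ℕ} {P : ℕ → Matrix (Fin (2 * l)) (Fin (2 * l)) ℝ}
  (hP : IsCliffordSystem l s m m P)
include hP

theorem isNegCliffordFamily :
    IsNegCliffordFamily (psJ (2 * l) s).toBilin' (fun i => Matrix.toLinAlgEquiv' (P i))
      (Finset.Icc 1 m) where
  isSelfAdjoint i hi := isSelfAdjoint_toLinAlgEquiv' (hP.1 i hi)
  mul_self i hi := by
    have h := hP.2 i hi i hi
    rw [cliffEta, if_pos rfl, if_pos (Finset.mem_Icc.1 hi).2, ← two_smul ℝ, mul_smul,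
      neg_one_smul] at h
    rw [← map_mul, smul_right_injective _ two_ne_zero h, map_neg, map_one]
  anticomm i hi j hj hij := by
    have h := hP.2 i hi j hj
    rw [cliffEta, if_neg hij, mul_zero, zero_smul, add_eq_zero_iff_eq_neg] at h
    rw [← map_mul, ← map_mul, h, map_neg]

theorem isIsometricInvolution_prod (hm4 : m % 4 = 0) :
    IsIsometricInvolution (psJ (2 * l) s).toBilin'
      (Matrix.toLinAlgEquiv' ((List.range m).map fun k => P (1 + k)).prod) := by
  rw [toLinAlgEquiv'_list_prod_map_range]
  exact hP.isNegCliffordFamily.isIsometricInvolution_list_prod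
    (fun i hi => mem_range'_one_iff_mem_Icc.1 hi) List.nodup_range' (by simpa)

theorem prod_mul_anticomm (hm : Even m) {j : ℕ} (hj : j ∈ Finset.Icc 1 m) :
    Matrix.toLinAlgEquiv' ((List.range m).map fun k => P (1 + k)).prod
        * Matrix.toLinAlgEquiv' (P j)
      = -(Matrix.toLinAlgEquiv' (P j)
        * Matrix.toLinAlgEquiv' ((List.range m).map fun k => P (1 + k)).prod) := by
  rw [toLinAlgEquiv'_list_prod_map_range]
  exact hP.isNegCliffordFamily.list_prod_mul_anticomm
    (fun i hi => mem_range'_one_iff_mem_Icc.1 hi) List.nodup_range' (by simpa)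
    (mem_range'_one_iff_mem_Icc.2 hj)

end IsCliffordSystem

theorem Mplus_connected_definite_cases_general (l s m r : ℕ) (hl : 0 < l)
    (hm : 2 ≤ m) (hm4 : m % 4 = 0) (hrm : r = m)
    (P : ℕ → Matrix (Fin (2 * l)) (Fin (2 * l)) ℝ)
    (hP : IsCliffordSystem l s m r P)
    (Pm : Matrix (Fin (2 * l)) (Fin (2 * l)) ℝ)
    (hPm : Pm = ((List.range m).map fun k => P (1 + k)).prod)
    (Mp : Set (Fin (2 * l) → ℝ))
    (hMp : Mp = {x | psInner (2 * l) s x x = 1 ∧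
      ∀ j ∈ Finset.Icc 1 m, psInner (2 * l) s (P j *ᵥ x) x = 0})
    (zpl : (Fin (2 * l) → ℝ) → (Fin (2 * l) → ℝ))
    (hzpl : zpl = fun z => (1 / 2 : ℝ) • (z + Pm *ᵥ z))
    (M1 M2 : Set (Fin (2 * l) → ℝ))
    (hM1 : M1 = {z ∈ Mp | 1 ≤ psInner (2 * l) s (zpl z) (zpl z)})
    (hM2 : M2 = {z ∈ Mp | psInner (2 * l) s (zpl z) (zpl z) ≤ 0}) :
    ((∀ z : Fin (2 * l) → ℝ, Pm *ᵥ z = z → z ≠ 0 → 0 < psInner (2 * l) s z z) →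
      Mp = M1 ∧ IsConnected Mp) ∧
    ((∀ z : Fin (2 * l) → ℝ, Pm *ᵥ z = z → z ≠ 0 → psInner (2 * l) s z z < 0) →
      Mp = M2 ∧ IsConnected Mp) := by
  subst r hPm hMp hzpl hM1 hM2
  have : Nonempty (Fin (2 * l)) := ⟨⟨0, by omega⟩⟩
  have hfam := hP.isNegCliffordFamily
  have hQ := hP.isIsometricInvolution_prod hm4
  have hQP := fun j => hP.prod_mul_anticomm (Nat.even_iff.2 (by omega)) (j := j)
  have h₁ : 1 ∈ Finset.Icc 1 m := Finset.mem_Icc.2 ⟨le_rfl, by omega⟩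
  have h₂ : 2 ∈ Finset.Icc 1 m := Finset.mem_Icc.2 ⟨by omega, hm⟩
  have hconn := fun Q hQ hQP hpos => (isPathConnected_focalSet (Q := Q) hQ hQP
    (isSymm_toBilin'_psJ _ _) hfam h₁ h₂ one_lt_two.ne hpos).isConnected
  simp only [psInner_eq_toBilin']
  refine ⟨fun hpos => ⟨?_, hconn _ hQ hQP hpos⟩, fun hneg => ⟨?_, hconn _ hQ.neg
    (fun j hj => neg_mul_eq_neg_mul_neg_of_anticomm (hQP j hj)) fun z hz hz0 => ?_⟩⟩
  · exact (Set.sep_eq_self_iff_mem_true.2 fun z hz => hQ.one_le_bilin_plusPart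
      (fun w => hfam.bilin_self_nonpos_of_pos h₁ (hQP 1 h₁) hpos) hz.1).symm
  · exact (Set.sep_eq_self_iff_mem_true.2 fun z _ =>
      bilin_plusPart_self_nonpos hQ.mul_self hneg z).symm
  · exact hfam.bilin_self_pos_of_neg h₁ (hQP 1 h₁) hneg (neg_eq_iff_eq_neg.mp hz) hz0

/-- with `m ≡ 0 (mod 4)`, `r = m`, `s = l ≤ 2l - 1`, `P = P_1 ⋯ P_m`:
if `⟨·,·⟩` is positive definite on `E₊(P)` (case (c-1), `(s₁,s₂) = (0,l)`), then
`M₊ = M₊,₁` and `M₊` is connected; if `⟨·,·⟩` is negative definite on `E₊(P)`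
(case (c-2), `(s₁,s₂) = (l,0)`), then `M₊ = M₊,₂` and `M₊` is connected. -/
theorem Mplus_connected_definite_cases (l s m r : ℕ) (hl : 0 < l) (hs : s ≤ 2 * l - 1)
    (hm : 2 ≤ m) (hm4 : m % 4 = 0) (hrm : r = m) (hsl : s = l)
    (P : ℕ → Matrix (Fin (2 * l)) (Fin (2 * l)) ℝ)
    (hP : IsCliffordSystem l s m r P)
    (Pm : Matrix (Fin (2 * l)) (Fin (2 * l)) ℝ)
    (hPm : Pm = ((List.range m).map fun k => P (1 + k)).prod)
    (Mp : Set (Fin (2 * l) → ℝ))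
    (hMp : Mp = {x | psInner (2 * l) s x x = 1 ∧
      ∀ j ∈ Finset.Icc 1 m, psInner (2 * l) s (P j *ᵥ x) x = 0})
    (zpl : (Fin (2 * l) → ℝ) → (Fin (2 * l) → ℝ))
    (hzpl : zpl = fun z => (1 / 2 : ℝ) • (z + Pm *ᵥ z))
    (M1 M2 : Set (Fin (2 * l) → ℝ))
    (hM1 : M1 = {z ∈ Mp | 1 ≤ psInner (2 * l) s (zpl z) (zpl z)})
    (hM2 : M2 = {z ∈ Mp | psInner (2 * l) s (zpl z) (zpl z) ≤ 0}) :
    ((∀ z : Fin (2 * l) → ℝ, Pm *ᵥ z = z → z ≠ 0 → 0 < psInner (2 * l) s z z) →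
      Mp = M1 ∧ IsConnected Mp) ∧
    ((∀ z : Fin (2 * l) → ℝ, Pm *ᵥ z = z → z ≠ 0 → psInner (2 * l) s z z < 0) →
      Mp = M2 ∧ IsConnected Mp) :=
  Mplus_connected_definite_cases_general l s m r hl hm hm4 hrm P hP Pm hPm Mp hMp zpl hzpl M1 M2 hM1
    hM2
end
end
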